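/- arXiv:1204.3943 — 8 statements merged into one kernel-verified Lean document; each statement's English description precedes it below -/
import Mathlib

section
/- Let R be a symmetric (n-1)×(n-1) matrix with R ≤ ρI (i.e., ρI − R positive semidefinite) for some ρ ≥ 0. Define √Ric(ρ) = Tr(√(ρI − R)). Then for any ρ' ≥ ρ, if Tr(√(ρI − R)) ≥ (n-1)√(ρ − κ) then Tr(√(ρ'I − R)) ≥ (n-1)√(ρ' − κ). -/
open scoped ComplexOrder in
/-- The positive semidefinite square root of a positive semidefinite matrix
(as defined in Mathlib, December 2024; since removed from Mathlib). -/
noncomputable def Matrix.PosSemidef.sqrt {n : Type*} [Fintype n] [DecidableEq n]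
    {𝕜 : Type*} [RCLike 𝕜] {A : Matrix n n 𝕜} (hA : A.PosSemidef) : Matrix n n 𝕜 :=
  (hA.1.eigenvectorUnitary : Matrix n n 𝕜) *
    Matrix.diagonal ((↑) ∘ (√·) ∘ hA.1.eigenvalues : n → 𝕜) *
    (star hA.1.eigenvectorUnitary : Matrix n n 𝕜)

/-!
If `μᵢ ≥ 0` are the eigenvalues of `ρI − R` and `δ = ρ' − ρ`, then `ρ'I − R = (ρI − R) + δI`, so
the two traces are `∑ √μᵢ` and `∑ √(μᵢ + δ)`. The triangle inequality in `ℂ` for the points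
`√μᵢ + i√δ` gives `∑ √(μᵢ + δ) ≥ √((∑ √μᵢ)² + m²δ) ≥ √(m²(ρ − κ) + m²δ) = m √(ρ' − κ)`.
-/

open Finset

theorem Real.sqrt_sq_sum_add_le_sum_sqrt {ι : Type*} (s : Finset ι) (a : ι → ℝ) {δ : ℝ}
    (hδ : 0 ≤ δ) :
    √((∑ i ∈ s, a i) ^ 2 + (#s * √δ) ^ 2) ≤ ∑ i ∈ s, √(a i ^ 2 + δ) := by
  have hnorm (x y : ℝ) : ‖(⟨x, y⟩ : ℂ)‖ = √(x ^ 2 + y ^ 2) := by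
    rw [Complex.norm_def, Complex.normSq_mk, sq, sq]
  have hsum : ∑ i ∈ s, (⟨a i, √δ⟩ : ℂ) = ⟨∑ i ∈ s, a i, #s * √δ⟩ := by
    apply Complex.ext <;> simp [Complex.re_sum, Complex.im_sum]
  calc √((∑ i ∈ s, a i) ^ 2 + (#s * √δ) ^ 2) = ‖∑ i ∈ s, (⟨a i, √δ⟩ : ℂ)‖ := by
        rw [hsum, hnorm]
    _ ≤ ∑ i ∈ s, ‖(⟨a i, √δ⟩ : ℂ)‖ := norm_sum_le _ _
    _ = ∑ i ∈ s, √(a i ^ 2 + δ) := by simp only [hnorm, Real.sq_sqrt hδ]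

theorem Real.card_mul_sqrt_add_le_sum_sqrt_add {ι : Type*} {s : Finset ι} {μ : ι → ℝ}
    (hμ : ∀ i ∈ s, 0 ≤ μ i) {c δ : ℝ} (hc : 0 ≤ c) (hδ : 0 ≤ δ)
    (h : #s * √c ≤ ∑ i ∈ s, √(μ i)) :
    #s * √(c + δ) ≤ ∑ i ∈ s, √(μ i + δ) := by
  calc (#s : ℝ) * √(c + δ) = √((#s * √c) ^ 2 + (#s * √δ) ^ 2) := by
        rw [mul_pow, mul_pow, Real.sq_sqrt hc, Real.sq_sqrt hδ, ← mul_add,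
          Real.sqrt_mul (by positivity), Real.sqrt_sq (by positivity)]
    _ ≤ √((∑ i ∈ s, √(μ i)) ^ 2 + (#s * √δ) ^ 2) := by gcongr
    _ ≤ ∑ i ∈ s, √(√(μ i) ^ 2 + δ) := Real.sqrt_sq_sum_add_le_sum_sqrt s _ hδ
    _ = ∑ i ∈ s, √(μ i + δ) := sum_congr rfl fun i hi ↦ by rw [Real.sq_sqrt (hμ i hi)]

open scoped ComplexOrder

namespace Matrix

variable {n 𝕜 : Type*} [Fintype n] [DecidableEq n] [RCLike 𝕜] {A : Matrix n n 𝕜}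

theorem PosSemidef.sqrt_eq_cfc_sqrt (hA : A.PosSemidef) : hA.sqrt = cfc Real.sqrt A := by
  rw [hA.1.cfc_eq]
  rfl

theorem IsHermitian.trace_cfc (hA : A.IsHermitian) (f : ℝ → ℝ) :
    (cfc f A).trace = ∑ i, (f (hA.eigenvalues i) : 𝕜) := by
  rw [hA.cfc_eq, IsHermitian.cfc, Unitary.conjStarAlgAut_apply, trace_mul_cycle,
    Unitary.coe_star_mul_self, one_mul, trace_diagonal]
  rfl

theorem IsHermitian.trace_cfc_add_smul_one (hA : A.IsHermitian) (f : ℝ → ℝ) (δ : ℝ) :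
    (cfc f (A + δ • 1)).trace = ∑ i, (f (hA.eigenvalues i + δ) : 𝕜) := by
  have hf : ContinuousOn f ((· + δ) '' spectrum ℝ A) :=
    (A.finite_real_spectrum.image _).continuousOn f
  rw [← hA.trace_cfc (f <| · + δ), cfc_comp' f (· + δ) A hf,
    cfc_add_const δ (fun x ↦ x) A, cfc_id' ℝ A, Algebra.algebraMap_eq_smul_one]

end Matrix

theorem rootRic_class_mono_general {m : ℕ} {R : Matrix (Fin m) (Fin m) ℝ}
    {ρ ρ' κ : ℝ} (hκρ : κ ≤ ρ) (hρρ' : ρ ≤ ρ')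
    (h : (ρ • (1 : Matrix (Fin m) (Fin m) ℝ) - R).PosSemidef)
    (h' : (ρ' • (1 : Matrix (Fin m) (Fin m) ℝ) - R).PosSemidef)
    (htr : (m : ℝ) * Real.sqrt (ρ - κ) ≤ h.sqrt.trace) :
    (m : ℝ) * Real.sqrt (ρ' - κ) ≤ h'.sqrt.trace := by
  have hshift : ρ' • 1 - R = (ρ • 1 - R) + (ρ' - ρ) • (1 : Matrix (Fin m) (Fin m) ℝ) := by
    module
  have htr_ρ : h.sqrt.trace = ∑ i, √(h.1.eigenvalues i) := by
    rw [h.sqrt_eq_cfc_sqrt, h.1.trace_cfc]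
    rfl
  have htr_ρ' : h'.sqrt.trace = ∑ i, √(h.1.eigenvalues i + (ρ' - ρ)) := by
    rw [h'.sqrt_eq_cfc_sqrt, hshift, h.1.trace_cfc_add_smul_one]
    rfl
  have key := Real.card_mul_sqrt_add_le_sum_sqrt_add (s := univ)
    (fun i _ ↦ h.eigenvalues_nonneg i) (sub_nonneg.2 hκρ) (sub_nonneg.2 hρρ')
    (by simpa [htr_ρ] using htr)
  simpa [htr_ρ'] using key

/-- Root-Ricci class is monotone in `ρ`: if `κ ≤ ρ ≤ ρ'`, `0 ≤ ρ`,
`R ≤ ρI` (so also `R ≤ ρ'I`), and `Tr √(ρI − R) ≥ (n−1)√(ρ−κ)`,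
then `Tr √(ρ'I − R) ≥ (n−1)√(ρ'−κ)`.  Here the matrices have size
`(n−1) × (n−1)`, represented by `Fin m` with `m = n−1`. -/
theorem rootRic_class_mono {m : ℕ} {R : Matrix (Fin m) (Fin m) ℝ}
    {ρ ρ' κ : ℝ} (hρ0 : 0 ≤ ρ) (hκρ : κ ≤ ρ) (hρρ' : ρ ≤ ρ')
    (h : (ρ • (1 : Matrix (Fin m) (Fin m) ℝ) - R).PosSemidef)
    (h' : (ρ' • (1 : Matrix (Fin m) (Fin m) ℝ) - R).PosSemidef)
    (htr : (m : ℝ) * Real.sqrt (ρ - κ) ≤ h.sqrt.trace) :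
    (m : ℝ) * Real.sqrt (ρ' - κ) ≤ h'.sqrt.trace :=
  rootRic_class_mono_general hκρ hρρ' h h' htr
end

section
/- For a fixed real symmetric positive semidefinite matrix Q with Tr(Q) fixed, the function ρ ↦ ρ − (Tr(√(ρI − R))/(n−1))², where R is a fixed symmetric matrix with R ≤ ρI for all large ρ, converges as ρ → ∞ to Tr(R)/(n−1). -/
/-!
Write `A = √(ρI − R)`. Since `Tr R = mρ − Tr A²`, the quantity minus `Tr R / m` is the variance
`Tr A² / m − (Tr A / m)²` of the spectrum of `A`, which is at most the mean squared deviation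
`Tr (A − √ρ)² / m` from `√ρ`. As `(A − √ρ)(A + √ρ) = −R` and `(A + √ρ)² ≥ ρ`, that deviation is
at most `Tr R² / (mρ) → 0`.
-/

open Filter Topology

namespace Matrix

variable {n : Type*} [Fintype n] [DecidableEq n]

lemma trace_sub_smul_one_sq_div_card [Nonempty n] (A : Matrix n n ℝ) (c : ℝ) :
    trace ((A - c • 1) ^ 2) / Fintype.card n =
      trace (A ^ 2) / Fintype.card n - (trace A / Fintype.card n) ^ 2 +
        (trace A / Fintype.card n - c) ^ 2 := by
  simp only [sq, sub_mul, mul_sub, smul_mul_assoc, mul_smul_comm, one_mul, mul_one,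
    trace_sub, trace_smul, trace_one, smul_eq_mul]
  field_simp
  ring

lemma IsHermitian.trace_sq_nonneg {X : Matrix n n ℝ} (hX : X.IsHermitian) :
    0 ≤ trace (X ^ 2) := by
  rw [sq]
  nth_rewrite 1 [← hX.eq]
  exact (posSemidef_conjTranspose_mul_self X).trace_nonneg

lemma IsHermitian.sq_trace_div_card_le [Nonempty n] {A : Matrix n n ℝ} (hA : A.IsHermitian) :
    (trace A / Fintype.card n) ^ 2 ≤ trace (A ^ 2) / Fintype.card n := by
  have hdev := trace_sub_smul_one_sq_div_card A (trace A / Fintype.card n)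
  rw [sub_self, sq (0 : ℝ), mul_zero, add_zero] at hdev
  have hcentered : (A - (trace A / Fintype.card n) • 1).IsHermitian :=
    hA.sub (isHermitian_one.smul (IsSelfAdjoint.all _))
  have := div_nonneg hcentered.trace_sq_nonneg (Nat.cast_nonneg (Fintype.card n))
  linarith

lemma trace_sq_div_card_sub_le [Nonempty n] (A : Matrix n n ℝ) (c : ℝ) :
    trace (A ^ 2) / Fintype.card n - (trace A / Fintype.card n) ^ 2 ≤
      trace ((A - c • 1) ^ 2) / Fintype.card n := by
  rw [trace_sub_smul_one_sq_div_card]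
  exact le_add_of_nonneg_right (sq_nonneg _)

lemma PosSemidef.sq_mul_trace_sub_smul_one_sq_le {A : Matrix n n ℝ} (hA : A.PosSemidef)
    {r : ℝ} (hr : 0 ≤ r) :
    r ^ 2 * trace ((A - r • 1) ^ 2) ≤ trace ((r ^ 2 • 1 - A ^ 2) ^ 2) := by
  set X := A - r • 1
  have hX : Xᴴ = X := (hA.isHermitian.sub (isHermitian_one.smul (IsSelfAdjoint.all r))).eq
  have hM : (A ^ 2 + (2 * r) • A).PosSemidef :=
    (hA.pow 2).add (hA.smul (by positivity))
  have key : (r ^ 2 • 1 - A ^ 2) ^ 2 = r ^ 2 • X ^ 2 + Xᴴ * (A ^ 2 + (2 * r) • A) * X := by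
    rw [hX]
    simp only [X, sq, sub_mul, mul_sub, add_mul, mul_add, smul_mul_assoc, mul_smul_comm,
      one_mul, mul_one, smul_smul, smul_sub, smul_add, mul_assoc]
    module
  rw [key, trace_add, trace_smul, smul_eq_mul]
  linarith [(hM.conjTranspose_mul_mul_same X).trace_nonneg]

lemma PosSemidef.sub_sq_trace_div_card_sub_mem_Icc [Nonempty n] {A R : Matrix n n ℝ}
    (hA : A.PosSemidef) {ρ : ℝ} (hρ : 0 < ρ) (hAR : A ^ 2 = ρ • 1 - R) :
    ρ - (trace A / Fintype.card n) ^ 2 - trace R / Fintype.card n ∈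
      Set.Icc 0 (trace (R ^ 2) / (Fintype.card n * ρ)) := by
  have hR : R = ρ • 1 - A ^ 2 := by rw [hAR, sub_sub_cancel]
  have hvariance : ρ - (trace A / Fintype.card n) ^ 2 - trace R / Fintype.card n =
      trace (A ^ 2) / Fintype.card n - (trace A / Fintype.card n) ^ 2 := by
    rw [hR, trace_sub, trace_smul, trace_one, smul_eq_mul]
    field_simp
    ring
  have hroot := hA.sq_mul_trace_sub_smul_one_sq_le (Real.sqrt_nonneg ρ)
  rw [Real.sq_sqrt hρ.le, ← hR] at hroot
  rw [hvariance]
  constructor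
  · linarith [hA.isHermitian.sq_trace_div_card_le]
  · calc _ ≤ trace ((A - √ρ • 1) ^ 2) / (Fintype.card n : ℝ) :=
          trace_sq_div_card_sub_le A √ρ
      _ ≤ trace (R ^ 2) / (Fintype.card n * ρ) := by
        rw [mul_comm, ← div_div]
        gcongr
        rwa [le_div_iff₀' hρ]

end Matrix

theorem conj_rootRic_tendsto_ricci_general {m : ℕ} (hm : 1 ≤ m)
    {R : Matrix (Fin m) (Fin m) ℝ}
    (f : ℝ → Matrix (Fin m) (Fin m) ℝ) (ρ₀ : ℝ)
    (hf : ∀ ρ ≥ ρ₀, (f ρ).PosSemidef ∧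
      (f ρ) ^ 2 = ρ • (1 : Matrix (Fin m) (Fin m) ℝ) - R) :
    Filter.Tendsto (fun ρ => ρ - ((f ρ).trace / (m : ℝ)) ^ 2)
      Filter.atTop (nhds (R.trace / (m : ℝ))) := by
  have : Nonempty (Fin m) := ⟨⟨0, hm⟩⟩
  suffices Tendsto (fun ρ => ρ - ((f ρ).trace / m) ^ 2 - R.trace / m) atTop (𝓝 0) by
    simpa using this.add_const (R.trace / m)
  have hbound : ∀ᶠ ρ in atTop,
      ρ - ((f ρ).trace / m) ^ 2 - R.trace / m ∈ Set.Icc 0 ((R ^ 2).trace / m / ρ) := by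
    filter_upwards [eventually_ge_atTop ρ₀, eventually_gt_atTop 0] with ρ hρ₀ hρ
    obtain ⟨hA, hAR⟩ := hf ρ hρ₀
    simpa [div_div] using hA.sub_sq_trace_div_card_sub_mem_Icc hρ hAR
  exact squeeze_zero' (hbound.mono fun _ h ↦ h.1) (hbound.mono fun _ h ↦ h.2)
    (tendsto_const_nhds.div_atTop tendsto_id)

/-- The conjugated root-Ricci curvature converges to the normalized trace
(Ricci curvature) for large `ρ`: if `f ρ` is, for all large `ρ`, the positive
semidefinite square root of `ρI − R` (for a fixed symmetric matrix `R` of size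
`(n−1) × (n−1)`, with `n − 1 = m ≥ 1`), then
`ρ − (Tr(f ρ)/(n−1))² → Tr(R)/(n−1)` as `ρ → ∞`. -/
theorem conj_rootRic_tendsto_ricci {m : ℕ} (hm : 1 ≤ m)
    {R : Matrix (Fin m) (Fin m) ℝ} (hR : R.IsSymm)
    (f : ℝ → Matrix (Fin m) (Fin m) ℝ) (ρ₀ : ℝ)
    (hf : ∀ ρ ≥ ρ₀, (f ρ).PosSemidef ∧
      (f ρ) ^ 2 = ρ • (1 : Matrix (Fin m) (Fin m) ℝ) - R) :
    Filter.Tendsto (fun ρ => ρ - ((f ρ).trace / (m : ℝ)) ^ 2)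
      Filter.atTop (nhds (R.trace / (m : ℝ))) :=
  conj_rootRic_tendsto_ricci_general hm f ρ₀ hf
end

section
/- The function α ↦ β(κ,α,ρ) = ρ + (n−2)α − ((n−1)√(ρ−κ) − (n−2)√(ρ−α))² is monotonically decreasing in α on [κ, ρ]. -/
/-! Substituting `u = √(ρ - α)`, so that `α = ρ - u²`, turns `β` into
`(n - 1)ρ - (n - 2)u² - ((n - 1)√(ρ - κ) - (n - 2)u)²`, whose increments factor as
`(n - 1)(n - 2)(u - v)(2√(ρ - κ) - u - v)`. This is nonnegative for `v ≤ u ≤ √(ρ - κ)`,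
so `β` increases with `u` and hence decreases with `α`. -/

lemma monotoneOn_neg_mul_sq_sub_sq {m : ℝ} (hm : 0 ≤ m) (a : ℝ) :
    MonotoneOn (fun u => -(m * u ^ 2) - ((m + 1) * a - m * u) ^ 2) (Set.Iic a) := by
  intro v hv u hu hvu
  have hfactor : (-(m * u ^ 2) - ((m + 1) * a - m * u) ^ 2) -
      (-(m * v ^ 2) - ((m + 1) * a - m * v) ^ 2) =
      m * (m + 1) * ((u - v) * (2 * a - u - v)) := by ring
  have hprod : 0 ≤ m * (m + 1) * ((u - v) * (2 * a - u - v)) := by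
    have : 0 ≤ 2 * a - u - v := by linarith [Set.mem_Iic.mp hu, Set.mem_Iic.mp hv]
    positivity [sub_nonneg.mpr hvu]
  linarith

theorem beta_antitone_general (n : ℕ) (hn : 2 ≤ n) {κ ρ : ℝ} :
    AntitoneOn (fun α => ρ + ((n : ℝ) - 2) * α -
      (((n : ℝ) - 1) * Real.sqrt (ρ - κ) -
        ((n : ℝ) - 2) * Real.sqrt (ρ - α)) ^ 2)
      (Set.Icc κ ρ) := by
  intro x ⟨hκx, hxρ⟩ y ⟨hκy, hyρ⟩ hxy
  have hm : (0 : ℝ) ≤ n - 2 := by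
    rw [sub_nonneg]
    exact_mod_cast hn
  have key := monotoneOn_neg_mul_sq_sub_sq hm √(ρ - κ)
    (Set.mem_Iic.mpr (Real.sqrt_le_sqrt (by linarith : ρ - y ≤ ρ - κ)))
    (Set.mem_Iic.mpr (Real.sqrt_le_sqrt (by linarith : ρ - x ≤ ρ - κ)))
    (Real.sqrt_le_sqrt (by linarith : ρ - y ≤ ρ - x))
  simp only [Real.sq_sqrt (sub_nonneg.mpr hxρ), Real.sq_sqrt (sub_nonneg.mpr hyρ),
    show (n : ℝ) - 2 + 1 = n - 1 by ring] at key
  linarith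

/-- The function `α ↦ β(κ,α,ρ) = ρ + (n−2)α − ((n−1)√(ρ−κ) − (n−2)√(ρ−α))²`
is monotonically decreasing on `[κ, ρ]`. -/
theorem beta_antitone (n : ℕ) (hn : 2 ≤ n) {κ ρ : ℝ}
    (hκρ : κ ≤ ρ) (hρ0 : 0 ≤ ρ) :
    AntitoneOn (fun α => ρ + ((n : ℝ) - 2) * α -
      (((n : ℝ) - 1) * Real.sqrt (ρ - κ) -
        ((n : ℝ) - 2) * Real.sqrt (ρ - α)) ^ 2)
      (Set.Icc κ ρ) :=
  beta_antitone_general n hn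
end

section
/- Let ρ ≥ 0 and r > 0 with √ρ·r < π. For every continuous function y : [0,r] → ℝ^{n−1} with L² derivative and y(0) = y(r) = 0, the energy E(ρ,y) = ∫₀ʳ (|y'|² − ρ|y|²) dt is nonnegative, and is zero only if y = 0. -/
/-!
Take `φ t = sin (√ρ t + δ)` with `δ = (π - √ρ r) / 2`: it solves `φ'' + ρ φ = 0` and has no zero
on `[0, r]` precisely because `√ρ r < π`, so `w = φ' / φ` is smooth there and solves the Riccati
equation `w' = -ρ - w²`. For each coordinate `y` of the curve, Picone's identity
`y'² - ρ y² = (y' - w y)² + (w y²)'` holds almost everywhere, and the product rule and the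
fundamental theorem of calculus for absolutely continuous functions turn it into
`E = ∫ (y' - w y)² ≥ 0`, the boundary term vanishing since `y 0 = y r = 0`. If `E = 0`, then
`y' = w y` a.e., so `(y / φ)' = 0` a.e. and the absolutely continuous function `y / φ` is constant,
equal to its value `0` at `t = 0`.
-/

open MeasureTheory Set Filter Real
open scoped Interval

structure IsNonvanishingOscillatorSolutionOn (ρ : ℝ) (φ : ℝ → ℝ) (s : Set ℝ) : Prop where
  contDiff : ContDiff ℝ 2 φ
  deriv_deriv : ∀ t ∈ s, deriv (deriv φ) t = -ρ * φ t
  ne_zero : ∀ t ∈ s, φ t ≠ 0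

theorem exists_isNonvanishingOscillatorSolutionOn_Icc {ρ r : ℝ} (hρ : 0 ≤ ρ)
    (hρr : √ρ * r < π) : ∃ φ, IsNonvanishingOscillatorSolutionOn ρ φ (Icc 0 r) := by
  set δ := (π - √ρ * r) / 2 with hδ
  have hφ' (t : ℝ) : HasDerivAt (fun t => sin (√ρ * t + δ)) (√ρ * cos (√ρ * t + δ)) t := by
    simpa [mul_comm] using ((hasDerivAt_id t).const_mul √ρ |>.add_const δ).sin
  have hφ'' (t : ℝ) :
      HasDerivAt (fun t => √ρ * cos (√ρ * t + δ)) (-ρ * sin (√ρ * t + δ)) t := by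
    refine ((((hasDerivAt_id t).const_mul √ρ).add_const δ).cos.const_mul √ρ).congr_deriv ?_
    simp only [id, mul_one]
    linear_combination -sin (√ρ * t + δ) * Real.mul_self_sqrt hρ
  refine ⟨fun t => sin (√ρ * t + δ), ⟨by fun_prop, fun t _ => ?_, fun t ht => ?_⟩⟩
  · rw [funext fun t => (hφ' t).deriv, (hφ'' t).deriv]
  · have hρt : √ρ * t ≤ √ρ * r := mul_le_mul_of_nonneg_left ht.2 (Real.sqrt_nonneg ρ)
    have : 0 ≤ √ρ * t := mul_nonneg (Real.sqrt_nonneg ρ) ht.1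
    have : 0 < δ := by linarith
    exact (sin_pos_of_pos_of_lt_pi (by linarith) (by linarith)).ne'

section Picone

variable {ρ t v : ℝ} {φ y : ℝ → ℝ}

theorem hasDerivAt_logDeriv_mul_sq (hφ : DifferentiableAt ℝ φ t)
    (hφ' : HasDerivAt (deriv φ) (-ρ * φ t) t) (hφt : φ t ≠ 0) (hy : HasDerivAt y v t) :
    HasDerivAt (fun s => logDeriv φ s * y s ^ 2)
      (v ^ 2 - ρ * y t ^ 2 - (v - logDeriv φ t * y t) ^ 2) t := by
  refine ((hφ'.fun_div hφ.hasDerivAt hφt).fun_mul (hy.fun_pow 2)).congr_deriv ?_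
  rw [logDeriv_apply]
  field_simp
  ring

theorem hasDerivAt_div_eq_sub_logDeriv_mul (hφ : DifferentiableAt ℝ φ t) (hφt : φ t ≠ 0)
    (hy : HasDerivAt y v t) :
    HasDerivAt (fun s => y s / φ s) ((v - logDeriv φ t * y t) / φ t) t := by
  refine (hy.fun_div hφ.hasDerivAt hφt).congr_deriv ?_
  rw [logDeriv_apply]
  field_simp

end Picone

section Primitive

variable {ρ a b : ℝ} {g y : ℝ → ℝ}

theorem IntervalIntegrable.absolutelyContinuousOnInterval_of_eq_integral
    (hg : IntervalIntegrable g volume a b) (hy : ∀ t, y t = ∫ s in a..t, g s) :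
    AbsolutelyContinuousOnInterval y a b := by
  obtain rfl : y = _ := funext hy
  exact hg.absolutelyContinuousOnInterval_intervalIntegral left_mem_uIcc

theorem IntervalIntegrable.sq_sub_mul_sq_of_eq_integral (hg : IntervalIntegrable g volume a b)
    (hg2 : IntervalIntegrable (fun t => g t ^ 2) volume a b) (hy : ∀ t, y t = ∫ s in a..t, g s) :
    IntervalIntegrable (fun t => g t ^ 2 - ρ * y t ^ 2) volume a b :=
  hg2.sub (((hg.absolutelyContinuousOnInterval_of_eq_integral hy).continuousOn.pow 2
    ).intervalIntegrable.const_mul ρ)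

end Primitive

namespace IsNonvanishingOscillatorSolutionOn

variable {ρ a b t : ℝ} {s : Set ℝ} {φ g y : ℝ → ℝ}

theorem differentiableAt (hφ : IsNonvanishingOscillatorSolutionOn ρ φ s) :
    DifferentiableAt ℝ φ t :=
  hφ.contDiff.differentiable two_ne_zero t

theorem hasDerivAt_deriv (hφ : IsNonvanishingOscillatorSolutionOn ρ φ s) (ht : t ∈ s) :
    HasDerivAt (deriv φ) (-ρ * φ t) t :=
  hφ.deriv_deriv t ht ▸ ((hφ.contDiff.deriv' (n := 1)).differentiable one_ne_zero t).hasDerivAt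

theorem absolutelyContinuousOnInterval_inv
    (hφ : IsNonvanishingOscillatorSolutionOn ρ φ (uIcc a b)) :
    AbsolutelyContinuousOnInterval (fun t => (φ t)⁻¹) a b :=
  ((hφ.contDiff.of_le one_le_two).contDiffOn.inv hφ.ne_zero).absolutelyContinuousOnInterval

theorem absolutelyContinuousOnInterval_logDeriv
    (hφ : IsNonvanishingOscillatorSolutionOn ρ φ (uIcc a b)) :
    AbsolutelyContinuousOnInterval (logDeriv φ) a b :=
  ((hφ.contDiff.deriv' (n := 1)).contDiffOn.div (hφ.contDiff.of_le one_le_two).contDiffOn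
    hφ.ne_zero).absolutelyContinuousOnInterval

theorem absolutelyContinuousOnInterval_logDeriv_mul_sq
    (hφ : IsNonvanishingOscillatorSolutionOn ρ φ (uIcc a b))
    (hy : AbsolutelyContinuousOnInterval y a b) :
    AbsolutelyContinuousOnInterval (fun s => logDeriv φ s * y s ^ 2) a b := by
  convert hφ.absolutelyContinuousOnInterval_logDeriv.fun_mul (hy.fun_mul hy) using 1
  ext s
  ring

theorem ae_deriv_logDeriv_mul_sq (hφ : IsNonvanishingOscillatorSolutionOn ρ φ (uIcc a b))
    (hg : IntervalIntegrable g volume a b) (hy : ∀ t, y t = ∫ s in a..t, g s) :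
    ∀ᵐ t, t ∈ uIcc a b → deriv (fun s => logDeriv φ s * y s ^ 2) t =
      g t ^ 2 - ρ * y t ^ 2 - (g t - logDeriv φ t * y t) ^ 2 := by
  obtain rfl : y = _ := funext hy
  filter_upwards [hg.ae_hasDerivAt_integral] with t hgt ht
  exact (hasDerivAt_logDeriv_mul_sq hφ.differentiableAt (hφ.hasDerivAt_deriv ht)
    (hφ.ne_zero t ht) (hgt ht a left_mem_uIcc)).deriv

theorem sq_sub_logDeriv_mul_ae_eq (hφ : IsNonvanishingOscillatorSolutionOn ρ φ (uIcc a b))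
    (hg : IntervalIntegrable g volume a b) (hy : ∀ t, y t = ∫ s in a..t, g s) :
    (fun t => (g t - logDeriv φ t * y t) ^ 2) =ᵐ[volume.restrict (Ι a b)]
      fun t => (g t ^ 2 - ρ * y t ^ 2) - deriv (fun s => logDeriv φ s * y s ^ 2) t := by
  rw [EventuallyEq, ae_restrict_iff' measurableSet_uIoc]
  filter_upwards [hφ.ae_deriv_logDeriv_mul_sq hg hy] with t hderiv ht
  rw [hderiv (uIoc_subset_uIcc ht)]
  ring

theorem intervalIntegrable_sq_sub_logDeriv_mul
    (hφ : IsNonvanishingOscillatorSolutionOn ρ φ (uIcc a b))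
    (hg : IntervalIntegrable g volume a b) (hg2 : IntervalIntegrable (fun t => g t ^ 2) volume a b)
    (hy : ∀ t, y t = ∫ s in a..t, g s) :
    IntervalIntegrable (fun t => (g t - logDeriv φ t * y t) ^ 2) volume a b :=
  ((hg.sq_sub_mul_sq_of_eq_integral hg2 hy).sub (hφ.absolutelyContinuousOnInterval_logDeriv_mul_sq
    (hg.absolutelyContinuousOnInterval_of_eq_integral hy)).intervalIntegrable_deriv).congr_ae
    (hφ.sq_sub_logDeriv_mul_ae_eq hg hy).symm

theorem integral_sq_sub_mul_sq_eq (hφ : IsNonvanishingOscillatorSolutionOn ρ φ (uIcc a b))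
    (hg : IntervalIntegrable g volume a b) (hg2 : IntervalIntegrable (fun t => g t ^ 2) volume a b)
    (hy : ∀ t, y t = ∫ s in a..t, g s) :
    ∫ t in a..b, (g t ^ 2 - ρ * y t ^ 2) = (∫ t in a..b, (g t - logDeriv φ t * y t) ^ 2)
      + (logDeriv φ b * y b ^ 2 - logDeriv φ a * y a ^ 2) := by
  have hF := hφ.absolutelyContinuousOnInterval_logDeriv_mul_sq
    (hg.absolutelyContinuousOnInterval_of_eq_integral hy)
  have hsq := intervalIntegral.integral_congr_ae_restrict (hφ.sq_sub_logDeriv_mul_ae_eq hg hy)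
  rw [hsq, intervalIntegral.integral_sub (hg.sq_sub_mul_sq_of_eq_integral (ρ := ρ) hg2 hy)
    hF.intervalIntegrable_deriv, hF.integral_deriv_eq_sub]
  ring

theorem integral_sq_sub_mul_sq_eq_of_eq_zero
    (hφ : IsNonvanishingOscillatorSolutionOn ρ φ (uIcc a b))
    (hg : IntervalIntegrable g volume a b) (hg2 : IntervalIntegrable (fun t => g t ^ 2) volume a b)
    (hy : ∀ t, y t = ∫ s in a..t, g s) (hyb : y b = 0) :
    ∫ t in a..b, (g t ^ 2 - ρ * y t ^ 2) = ∫ t in a..b, (g t - logDeriv φ t * y t) ^ 2 := by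
  rw [hφ.integral_sq_sub_mul_sq_eq hg hg2 hy, hyb, hy a, intervalIntegral.integral_same]
  ring

theorem eq_zero_of_ae_eq_logDeriv_mul (hφ : IsNonvanishingOscillatorSolutionOn ρ φ (uIcc a b))
    (hg : IntervalIntegrable g volume a b) (hy : ∀ t, y t = ∫ s in a..t, g s)
    (hgy : ∀ᵐ t, t ∈ uIcc a b → g t = logDeriv φ t * y t) :
    ∀ t ∈ uIcc a b, y t = 0 := by
  have hAC : AbsolutelyContinuousOnInterval (fun t => y t / φ t) a b := by
    simpa only [div_eq_mul_inv] using
      (hg.absolutelyContinuousOnInterval_of_eq_integral hy).fun_mul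
        hφ.absolutelyContinuousOnInterval_inv
  have hderiv : ∀ᵐ t, t ∈ uIcc a b → HasDerivAt (fun t => y t / φ t) 0 t := by
    obtain rfl : y = _ := funext hy
    filter_upwards [hg.ae_hasDerivAt_integral, hgy] with t hyt hgt ht
    simpa [hgt ht] using hasDerivAt_div_eq_sub_logDeriv_mul hφ.differentiableAt
      (hφ.ne_zero t ht) (hyt ht a left_mem_uIcc)
  obtain ⟨C, hC⟩ := hAC.const_of_ae_hasDerivAt_zero hderiv
  have hC0 : C = 0 := by
    rw [← hC a left_mem_uIcc, hy a, intervalIntegral.integral_same, zero_div]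
  intro t ht
  simpa [hC0, hφ.ne_zero t ht] using hC t ht

theorem integral_sq_sub_mul_sq_nonneg (hab : a ≤ b)
    (hφ : IsNonvanishingOscillatorSolutionOn ρ φ (Icc a b))
    (hg : IntervalIntegrable g volume a b) (hg2 : IntervalIntegrable (fun t => g t ^ 2) volume a b)
    (hy : ∀ t, y t = ∫ s in a..t, g s) (hyb : y b = 0) :
    0 ≤ ∫ t in a..b, (g t ^ 2 - ρ * y t ^ 2) := by
  rw [← uIcc_of_le hab] at hφ
  rw [hφ.integral_sq_sub_mul_sq_eq_of_eq_zero hg hg2 hy hyb]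
  exact intervalIntegral.integral_nonneg hab fun t _ => sq_nonneg _

theorem eq_zero_of_integral_sq_sub_mul_sq_eq_zero (hab : a ≤ b)
    (hφ : IsNonvanishingOscillatorSolutionOn ρ φ (Icc a b))
    (hg : IntervalIntegrable g volume a b) (hg2 : IntervalIntegrable (fun t => g t ^ 2) volume a b)
    (hy : ∀ t, y t = ∫ s in a..t, g s) (hyb : y b = 0)
    (h0 : ∫ t in a..b, (g t ^ 2 - ρ * y t ^ 2) = 0) :
    ∀ t ∈ Icc a b, y t = 0 := by
  rw [← uIcc_of_le hab] at hφ ⊢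
  rw [hφ.integral_sq_sub_mul_sq_eq_of_eq_zero hg hg2 hy hyb,
    intervalIntegral.integral_of_le hab] at h0
  have hsq := (integral_eq_zero_iff_of_nonneg (fun t => sq_nonneg _)
    ((intervalIntegrable_iff_integrableOn_Ioc_of_le hab).mp
      (hφ.intervalIntegrable_sq_sub_logDeriv_mul hg hg2 hy))).mp h0
  refine hφ.eq_zero_of_ae_eq_logDeriv_mul hg hy ?_
  rw [Measure.restrict_congr_set Ioc_ae_eq_Icc, EventuallyEq,
    ae_restrict_iff' measurableSet_Icc] at hsq
  filter_upwards [hsq] with t ht htab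
  rw [uIcc_of_le hab] at htab
  simpa [sub_eq_zero] using ht htab

end IsNonvanishingOscillatorSolutionOn

section EuclideanSpace

variable {ι : Type*} [Fintype ι] {ρ a b : ℝ} {g y : ℝ → EuclideanSpace ℝ ι}

theorem IntervalIntegrable.euclideanSpace_apply (hg : IntervalIntegrable g volume a b) (i : ι) :
    IntervalIntegrable (fun t => g t i) volume a b :=
  ⟨(EuclideanSpace.proj i : EuclideanSpace ℝ ι →L[ℝ] ℝ).integrable_comp hg.1,
    (EuclideanSpace.proj i : EuclideanSpace ℝ ι →L[ℝ] ℝ).integrable_comp hg.2⟩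

theorem IntervalIntegrable.euclideanSpace_apply_sq (hg : IntervalIntegrable g volume a b)
    (hg2 : IntervalIntegrable (fun t => ‖g t‖ ^ 2) volume a b) (i : ι) :
    IntervalIntegrable (fun t => g t i ^ 2) volume a b := by
  refine hg2.mono_fun' ((hg.euclideanSpace_apply i).def'.aestronglyMeasurable.pow 2)
    (Eventually.of_forall fun t => ?_)
  simpa [sq_abs] using pow_le_pow_left₀ (norm_nonneg _) (PiLp.norm_apply_le (g t) i) 2

theorem apply_eq_integral_apply (hg : IntervalIntegrable g volume a b)
    (hy : ∀ t, y t = ∫ s in a..t, g s) {t : ℝ} (ht : t ∈ uIcc a b) (i : ι) :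
    y t i = ∫ s in a..t, g s i := by
  rw [hy t]
  exact ((EuclideanSpace.proj i).intervalIntegral_comp_comm
    (hg.mono_set (uIcc_subset_uIcc_left ht))).symm

theorem integral_norm_sq_sub_mul_norm_sq_eq_sum (hg : IntervalIntegrable g volume a b)
    (hg2 : IntervalIntegrable (fun t => ‖g t‖ ^ 2) volume a b)
    (hy : ∀ t, y t = ∫ s in a..t, g s) :
    ∫ t in a..b, (‖g t‖ ^ 2 - ρ * ‖y t‖ ^ 2) =
      ∑ i, ∫ t in a..b, (g t i ^ 2 - ρ * (∫ s in a..t, g s i) ^ 2) := by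
  rw [← intervalIntegral.integral_finsetSum fun i _ =>
    (hg.euclideanSpace_apply i).sq_sub_mul_sq_of_eq_integral (hg.euclideanSpace_apply_sq hg2 i)
      fun _ => rfl]
  refine intervalIntegral.integral_congr fun t ht => ?_
  simp only [EuclideanSpace.real_norm_sq_eq, apply_eq_integral_apply hg hy ht,
    Finset.sum_sub_distrib, Finset.mul_sum]

namespace IsNonvanishingOscillatorSolutionOn

variable {φ : ℝ → ℝ}

theorem integral_norm_sq_sub_mul_norm_sq_nonneg (hab : a ≤ b)
    (hφ : IsNonvanishingOscillatorSolutionOn ρ φ (Icc a b))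
    (hg : IntervalIntegrable g volume a b)
    (hg2 : IntervalIntegrable (fun t => ‖g t‖ ^ 2) volume a b)
    (hy : ∀ t, y t = ∫ s in a..t, g s) (hyb : y b = 0) :
    0 ≤ ∫ t in a..b, (‖g t‖ ^ 2 - ρ * ‖y t‖ ^ 2) := by
  rw [integral_norm_sq_sub_mul_norm_sq_eq_sum hg hg2 hy]
  refine Finset.sum_nonneg fun i _ => hφ.integral_sq_sub_mul_sq_nonneg hab
    (hg.euclideanSpace_apply i) (hg.euclideanSpace_apply_sq hg2 i) (fun _ => rfl) ?_
  rw [← apply_eq_integral_apply hg hy right_mem_uIcc, hyb, PiLp.zero_apply]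

theorem eq_zero_of_integral_norm_sq_sub_mul_norm_sq_eq_zero (hab : a ≤ b)
    (hφ : IsNonvanishingOscillatorSolutionOn ρ φ (Icc a b))
    (hg : IntervalIntegrable g volume a b)
    (hg2 : IntervalIntegrable (fun t => ‖g t‖ ^ 2) volume a b)
    (hy : ∀ t, y t = ∫ s in a..t, g s) (hyb : y b = 0)
    (h0 : ∫ t in a..b, (‖g t‖ ^ 2 - ρ * ‖y t‖ ^ 2) = 0) :
    ∀ t ∈ Icc a b, y t = 0 := by
  have hyb' (i : ι) : ∫ s in a..b, g s i = 0 := by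
    rw [← apply_eq_integral_apply hg hy right_mem_uIcc, hyb, PiLp.zero_apply]
  rw [integral_norm_sq_sub_mul_norm_sq_eq_sum hg hg2 hy, Finset.sum_eq_zero_iff_of_nonneg
    fun i _ => hφ.integral_sq_sub_mul_sq_nonneg hab (hg.euclideanSpace_apply i)
      (hg.euclideanSpace_apply_sq hg2 i) (fun _ => rfl) (hyb' i)] at h0
  intro t ht
  ext i
  rw [apply_eq_integral_apply hg hy (uIcc_of_le hab ▸ ht), PiLp.zero_apply]
  exact hφ.eq_zero_of_integral_sq_sub_mul_sq_eq_zero hab (hg.euclideanSpace_apply i)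
    (hg.euclideanSpace_apply_sq hg2 i) (fun _ => rfl) (hyb' i) (h0 i (Finset.mem_univ i)) t ht

end IsNonvanishingOscillatorSolutionOn

end EuclideanSpace

/-- Positive definiteness of the comparison energy: if `0 ≤ ρ`, `0 < r`,
`√ρ·r < π`, and `y ∈ H¹₀((0,r), ℝ^{n−1})` — represented as
`y t = ∫₀ᵗ g` with `g` square-integrable on `[0,r]` and `y r = 0` — then
`E(ρ,y) = ∫₀ʳ (|y'|² − ρ|y|²) dt ≥ 0`, with equality only if `y ≡ 0` on `[0,r]`. -/
theorem comparison_energy_posdef {m : ℕ} {ρ r : ℝ}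
    (hρ : 0 ≤ ρ) (hr : 0 < r) (hρr : Real.sqrt ρ * r < Real.pi)
    (g : ℝ → EuclideanSpace ℝ (Fin m))
    (hg : IntervalIntegrable g MeasureTheory.volume 0 r)
    (hg2 : IntervalIntegrable (fun t => ‖g t‖ ^ 2) MeasureTheory.volume 0 r)
    (y : ℝ → EuclideanSpace ℝ (Fin m))
    (hy : ∀ t, y t = ∫ s in (0:ℝ)..t, g s)
    (hyr : y r = 0) :
    0 ≤ ∫ t in (0:ℝ)..r, (‖g t‖ ^ 2 - ρ * ‖y t‖ ^ 2) ∧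
      ((∫ t in (0:ℝ)..r, (‖g t‖ ^ 2 - ρ * ‖y t‖ ^ 2)) = 0 →
        ∀ t ∈ Set.Icc (0:ℝ) r, y t = 0) := by
  obtain ⟨φ, hφ⟩ := exists_isNonvanishingOscillatorSolutionOn_Icc hρ hρr
  exact ⟨hφ.integral_norm_sq_sub_mul_norm_sq_nonneg hr.le hg hg2 hy hyr,
    hφ.eq_zero_of_integral_norm_sq_sub_mul_norm_sq_eq_zero hr.le hg hg2 hy hyr⟩
end

section
/- Under the hypotheses R(t) ≤ ρI, ρ ≥ 0, √ρ·r < π, the boundary value problem y'' = −R(t)y, y(0) = 0, y(r) = v has a unique solution for each v ∈ ℝ^{n−1}. -/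
/-!
Uniqueness comes from a Picone (Riccati) argument. Pick `√ρ < k < π / r`; then
`g t = -k tan (k (t - r/2))` is finite on `[0, r]` and solves `g' = -(k² + g²)`. For a solution `w`
with `w 0 = w r = 0`, the function `g |w|² - ⟪w, w'⟫` vanishes at both ends and has derivative
`-|w' - g w|² - (ρ |w|² - ⟪w, R w⟫) - (k² - ρ) |w|² ≤ 0`, so it is constant; its derivative then
vanishes, and `k² > ρ` forces `w = 0`.

Existence: Picard iteration (some iterate of the Picard operator is a contraction) solves the
initial value problems `y 0 = 0`, `y' 0 = c`. The endpoint map `c ↦ y r` is linear and, by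
uniqueness, injective, hence surjective.
-/

open Matrix Set Function Real intervalIntegral
open scoped NNReal Nat

lemma continuous_apply_comp_projIcc {X : Type*} [TopologicalSpace X] {F : ℝ → X → X} {a b : ℝ}
    (hF : Continuous (uncurry F)) (hab : a ≤ b) (u : C(Icc a b, X)) :
    Continuous fun s => F s (u (projIcc a b hab s)) :=
  hF.comp (continuous_id.prodMk (u.continuous.comp continuous_projIcc))

section Picard

variable {E : Type*} [NormedAddCommGroup E] [NormedSpace ℝ E]
  {F : ℝ → E → E} {a b : ℝ} {K : ℝ≥0}

noncomputable def picardMap (hF : Continuous (uncurry F)) (hab : a ≤ b) (x₀ : E)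
    (u : C(Icc a b, E)) : C(Icc a b, E) where
  toFun t := x₀ + ∫ s in a..t, F s (u (projIcc a b hab s))
  continuous_toFun :=
    (continuous_const.add (continuous_primitive
      (fun _ _ => (continuous_apply_comp_projIcc hF hab u).intervalIntegrable _ _) a)).comp
      continuous_subtype_val

lemma picardMap_apply (hF : Continuous (uncurry F)) (hab : a ≤ b) (x₀ : E) (u : C(Icc a b, E))
    (t : Icc a b) :
    picardMap hF hab x₀ u t = x₀ + ∫ s in a..t, F s (u (projIcc a b hab s)) := rfl

lemma integral_mul_pow_sub_div_factorial (K a t : ℝ) (n : ℕ) :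
    ∫ s in a..t, K * ((K * (s - a)) ^ n / n !) = (K * (t - a)) ^ (n + 1) / (n + 1)! := by
  simp_rw [mul_pow, ← mul_div_assoc, ← mul_assoc, ← pow_succ']
  rw [integral_div, integral_const_mul, integral_comp_sub_right (· ^ n), integral_pow,
    Nat.factorial_succ]
  push_cast
  field_simp
  ring

lemma dist_iterate_picardMap_apply_le (hF : Continuous (uncurry F)) (hab : a ≤ b)
    (hK : ∀ t ∈ Icc a b, LipschitzWith K (F t)) (x₀ : E) (u w : C(Icc a b, E)) (n : ℕ)
    (t : Icc a b) :
    dist ((picardMap hF hab x₀)^[n] u t) ((picardMap hF hab x₀)^[n] w t) ≤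
      (K * ((t : ℝ) - a)) ^ n / n ! * dist u w := by
  induction n generalizing t with
  | zero => simpa using ContinuousMap.dist_apply_le_dist t
  | succ n ih =>
    set Φ := picardMap hF hab x₀
    have hint (v : C(Icc a b, E)) := (continuous_apply_comp_projIcc hF hab (Φ^[n] v))
      |>.intervalIntegrable (μ := MeasureTheory.volume) a t
    rw [iterate_succ_apply', iterate_succ_apply', dist_eq_norm, picardMap_apply, picardMap_apply,
      add_sub_add_left_eq_sub, ← integral_sub (hint u) (hint w),
      ← integral_mul_pow_sub_div_factorial, ← integral_mul_const]
    refine norm_integral_le_of_norm_le t.2.1 (Filter.Eventually.of_forall fun s hs => ?_)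
      ((by fun_prop : Continuous _).intervalIntegrable _ _)
    have hs' : s ∈ Icc a b := ⟨hs.1.le, hs.2.trans t.2.2⟩
    rw [← dist_eq_norm, projIcc_of_mem hab hs', mul_assoc]
    exact ((hK s hs').dist_le_mul _ _).trans (by gcongr; exact ih ⟨s, hs'⟩)

lemma exists_contractingWith_iterate_picardMap (hF : Continuous (uncurry F)) (hab : a ≤ b)
    (hK : ∀ t ∈ Icc a b, LipschitzWith K (F t)) (x₀ : E) :
    ∃ (n : ℕ) (C : ℝ≥0), ContractingWith C (picardMap hF hab x₀)^[n] := by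
  obtain ⟨n, hn⟩ := FloorSemiring.tendsto_pow_div_factorial_atTop (K * (b - a))
    |>.eventually (gt_mem_nhds zero_lt_one) |>.exists
  have hq : 0 ≤ (K * (b - a)) ^ n / n ! :=
    div_nonneg (pow_nonneg (mul_nonneg K.2 (sub_nonneg.2 hab)) _) (Nat.cast_nonneg _)
  refine ⟨n, ⟨_, hq⟩, hn, LipschitzWith.of_dist_le_mul fun u w => ?_⟩
  refine (ContinuousMap.dist_le (mul_nonneg hq dist_nonneg)).2 fun t =>
    (dist_iterate_picardMap_apply_le hF hab hK x₀ u w n t).trans ?_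
  have : 0 ≤ (t : ℝ) - a := sub_nonneg.2 t.2.1
  have : (t : ℝ) - a ≤ b - a := sub_le_sub_right t.2.2 a
  gcongr

theorem exists_forall_mem_Icc_hasDerivAt_of_lipschitzWith [CompleteSpace E]
    (hF : Continuous (uncurry F)) (hab : a ≤ b) (hK : ∀ t ∈ Icc a b, LipschitzWith K (F t))
    (x₀ : E) : ∃ y : ℝ → E, y a = x₀ ∧ ∀ t ∈ Icc a b, HasDerivAt y (F t (y t)) t := by
  obtain ⟨n, C, hC⟩ := exists_contractingWith_iterate_picardMap hF hab hK x₀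
  have : Nonempty C(Icc a b, E) := ⟨0⟩
  set u := ContractingWith.fixedPoint _ hC
  have hu : picardMap hF hab x₀ u = u := hC.isFixedPt_fixedPoint_iterate
  have hg := continuous_apply_comp_projIcc hF hab u
  refine ⟨fun t => x₀ + ∫ s in a..t, F s (u (projIcc a b hab s)), by simp, fun t ht => ?_⟩
  have hyu : x₀ + ∫ s in a..t, F s (u (projIcc a b hab s)) = u (projIcc a b hab t) := by
    rw [projIcc_of_mem hab ht]
    exact congrArg (· ⟨t, ht⟩) hu
  beta_reduce
  rw [hyu]
  exact (integral_hasDerivAt_right (hg.intervalIntegrable _ _)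
    hg.stronglyMeasurable.stronglyMeasurableAtFilter hg.continuousAt).const_add x₀

theorem exists_forall_mem_Icc_hasDerivAt_clm_apply [CompleteSpace E] {A : ℝ → E →L[ℝ] E}
    (hA : Continuous A) (hab : a ≤ b) (x₀ : E) :
    ∃ y : ℝ → E, y a = x₀ ∧ ∀ t ∈ Icc a b, HasDerivAt y (A t (y t)) t := by
  obtain ⟨C, hC⟩ := isCompact_Icc.exists_bound_of_continuousOn hA.continuousOn
  exact exists_forall_mem_Icc_hasDerivAt_of_lipschitzWith (K := C.toNNReal) (F := fun t x => A t x)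
    ((hA.comp continuous_fst).clm_apply continuous_snd) hab
    (fun t ht => (A t).lipschitz.weaken (NNReal.le_toNNReal_of_coe_le (hC t ht))) x₀

end Picard

lemma eqOn_zero_of_hasDerivAt_of_nonpos_of_eq {f f' : ℝ → ℝ} {a b : ℝ}
    (hf : ∀ t ∈ Icc a b, HasDerivAt f (f' t) t) (hf' : ∀ t ∈ Ioo a b, f' t ≤ 0)
    (hfab : f a = f b) : EqOn f' 0 (Ioo a b) := by
  have hanti : AntitoneOn f (Icc a b) := by
    refine antitoneOn_of_hasDerivWithinAt_nonpos (f' := f') (convex_Icc a b)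
      (fun t ht => (hf t ht).continuousAt.continuousWithinAt) (fun t ht => ?_) ?_
    · exact (hf t (interior_subset ht)).hasDerivWithinAt
    · simpa only [interior_Icc] using hf'
  intro t ht
  have hab : a ≤ b := (ht.1.trans ht.2).le
  have hconst : ∀ s ∈ Ioo a b, f s = f a := fun s hs =>
    le_antisymm (hanti (left_mem_Icc.2 hab) (Ioo_subset_Icc_self hs) hs.1.le)
      (hfab ▸ hanti (Ioo_subset_Icc_self hs) (right_mem_Icc.2 hab) hs.2.le)
  exact (hf t (Ioo_subset_Icc_self ht)).unique ((hasDerivAt_const t (f a)).congr_of_eventuallyEq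
    (Filter.eventually_of_mem (isOpen_Ioo.mem_nhds ht) hconst))

lemma HasDerivAt.eq_zero_of_eqOn_Icc {E : Type*} [NormedAddCommGroup E] [NormedSpace ℝ E]
    {y : ℝ → E} {y' : E} {a b : ℝ} (hy : HasDerivAt y y' a) (hab : a < b)
    (h : EqOn y 0 (Icc a b)) : y' = 0 :=
  (uniqueDiffOn_Icc hab a (left_mem_Icc.2 hab.le)).eq_deriv _ hy.hasDerivWithinAt
    ((hasDerivWithinAt_const a _ 0).congr (fun _ ht => h ht) (h (left_mem_Icc.2 hab.le)))

lemma HasDerivAt.dotProduct {𝕜 ι : Type*} [NontriviallyNormedField 𝕜] [Fintype ι]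
    {u v : 𝕜 → ι → 𝕜} {u' v' : ι → 𝕜} {t : 𝕜} (hu : HasDerivAt u u' t)
    (hv : HasDerivAt v v' t) : HasDerivAt (fun s => u s ⬝ᵥ v s) (u' ⬝ᵥ v t + u t ⬝ᵥ v') t := by
  show HasDerivAt (fun s => ∑ i, u s i * v s i) (∑ i, u' i * v t i + ∑ i, u t i * v' i) t
  rw [← Finset.sum_add_distrib]
  exact HasDerivAt.fun_sum fun i _ => (hasDerivAt_pi.1 hu i).mul (hasDerivAt_pi.1 hv i)

lemma hasDerivAt_neg_mul_tan {k c t : ℝ} (h : cos (k * (t - c)) ≠ 0) :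
    HasDerivAt (fun s => -k * tan (k * (s - c))) (-(k ^ 2 + (-k * tan (k * (t - c))) ^ 2)) t := by
  refine (((hasDerivAt_tan h).comp t (((hasDerivAt_id t).sub_const c).const_mul k)).const_mul
    (-k)).congr_deriv ?_
  rw [tan_eq_sin_div_cos]
  field_simp
  linear_combination k ^ 2 * sin_sq_add_cos_sq (k * (t - c))

lemma Matrix.dotProduct_mulVec_le_of_posSemidef {ι : Type*} [Fintype ι] [DecidableEq ι] {ρ : ℝ}
    {A : Matrix ι ι ℝ} (h : (ρ • 1 - A).PosSemidef) (x : ι → ℝ) :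
    x ⬝ᵥ A *ᵥ x ≤ ρ * (x ⬝ᵥ x) := by
  have := h.dotProduct_mulVec_nonneg x
  simp only [star_trivial, sub_mulVec, smul_mulVec, one_mulVec, dotProduct_sub,
    dotProduct_smul, smul_eq_mul] at this
  linarith

section Jacobi

variable {ι : Type*} [Fintype ι] {R : ℝ → Matrix ι ι ℝ} {s : Set ℝ} {a b : ℝ}

def IsJacobiField (R : ℝ → Matrix ι ι ℝ) (s : Set ℝ) (y dy : ℝ → ι → ℝ) : Prop :=
  (∀ t ∈ s, HasDerivAt y (dy t) t) ∧ ∀ t ∈ s, HasDerivAt dy (-(R t *ᵥ y t)) t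

lemma IsJacobiField.sub {y dy z dz : ℝ → ι → ℝ} (hy : IsJacobiField R s y dy)
    (hz : IsJacobiField R s z dz) :
    IsJacobiField R s (fun t => y t - z t) (fun t => dy t - dz t) :=
  ⟨fun t ht => (hy.1 t ht).sub (hz.1 t ht), fun t ht =>
    ((hy.2 t ht).sub (hz.2 t ht)).congr_deriv (by rw [mulVec_sub, neg_sub, neg_sub_neg])⟩

lemma IsJacobiField.sum_smul {κ : Type*} [Fintype κ] {y dy : κ → ℝ → ι → ℝ}
    (hy : ∀ j, IsJacobiField R s (y j) (dy j)) (c : κ → ℝ) :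
    IsJacobiField R s (fun t => ∑ j, c j • y j t) (fun t => ∑ j, c j • dy j t) := by
  refine ⟨fun t ht => HasDerivAt.fun_sum fun j _ => ((hy j).1 t ht).const_smul (c j),
    fun t ht => ?_⟩
  refine (HasDerivAt.fun_sum fun j _ => ((hy j).2 t ht).const_smul (c j)).congr_deriv ?_
  simp only [mulVec_sum, mulVec_smul, smul_neg, Finset.sum_neg_distrib]

theorem IsJacobiField.eqOn_zero [DecidableEq ι] {ρ k : ℝ} {y dy : ℝ → ι → ℝ}
    (hy : IsJacobiField R (Icc a b) y dy) (ha : y a = 0) (hb : y b = 0)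
    (hR : ∀ t ∈ Icc a b, (ρ • 1 - R t).PosSemidef) (hρk : ρ < k ^ 2) (hk : |k| * (b - a) < π) :
    EqOn y 0 (Icc a b) := by
  set g : ℝ → ℝ := fun s => -k * tan (k * (s - (a + b) / 2))
  have hcos : ∀ t ∈ Icc a b, cos (k * (t - (a + b) / 2)) ≠ 0 := by
    intro t ht
    refine (cos_pos_of_mem_Ioo (abs_lt.1 ?_)).ne'
    rw [abs_mul]
    have : |t - (a + b) / 2| ≤ (b - a) / 2 := abs_le.2 ⟨by linarith [ht.1], by linarith [ht.2]⟩
    nlinarith [abs_nonneg k]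
  set P : ℝ → ℝ := fun t => g t * (y t ⬝ᵥ y t) - y t ⬝ᵥ dy t
  set P' : ℝ → ℝ := fun t => -(k ^ 2 + g t ^ 2) * (y t ⬝ᵥ y t)
    + g t * (dy t ⬝ᵥ y t + y t ⬝ᵥ dy t) - (dy t ⬝ᵥ dy t + y t ⬝ᵥ -(R t *ᵥ y t))
  have hP (t) (ht : t ∈ Icc a b) : HasDerivAt P (P' t) t :=
    ((hasDerivAt_neg_mul_tan (hcos t ht)).mul ((hy.1 t ht).dotProduct (hy.1 t ht))).sub
      ((hy.1 t ht).dotProduct (hy.2 t ht))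
  have hP' (t) (ht : t ∈ Icc a b) : P' t ≤ -(k ^ 2 - ρ) * (y t ⬝ᵥ y t) := by
    have hsq := dotProduct_star_self_nonneg (dy t - g t • y t)
    have hRy := dotProduct_mulVec_le_of_posSemidef (hR t ht) (y t)
    simp only [P', star_trivial, dotProduct_sub, sub_dotProduct, dotProduct_smul, smul_dotProduct,
      smul_eq_mul, dotProduct_neg] at hsq ⊢
    rw [dotProduct_comm (dy t) (y t)] at hsq ⊢
    linarith
  have hyy (t) : 0 ≤ y t ⬝ᵥ y t := dotProduct_star_self_nonneg (y t)
  have hP'0 := eqOn_zero_of_hasDerivAt_of_nonpos_of_eq hP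
    (fun t ht => (hP' t (Ioo_subset_Icc_self ht)).trans
      (mul_nonpos_of_nonpos_of_nonneg (by linarith) (hyy t)))
    (by simp only [P, ha, hb, dotProduct_zero, zero_dotProduct, mul_zero, sub_zero])
  intro t ht
  rcases eq_endpoints_or_mem_Ioo_of_mem_Icc ht with rfl | rfl | hto
  · exact ha
  · exact hb
  · have := hP' t ht
    rw [hP'0 hto, Pi.zero_apply] at this
    exact dotProduct_self_eq_zero.1 (le_antisymm (by nlinarith) (hyy t))

theorem exists_isJacobiField_initialValue (hR : Continuous R) (hab : a ≤ b) (x v : ι → ℝ) :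
    ∃ y dy, IsJacobiField R (Icc a b) y dy ∧ y a = x ∧ dy a = v := by
  let A : ℝ → ((ι → ℝ) × (ι → ℝ)) →L[ℝ] ((ι → ℝ) × (ι → ℝ)) := fun t =>
    LinearMap.toContinuousLinearMap
      ((LinearMap.snd ℝ _ _).prod (-(R t).mulVecLin ∘ₗ LinearMap.fst ℝ _ _))
  have hA : Continuous A := continuous_clm_apply.2 fun p =>
    continuous_const.prodMk (hR.matrix_mulVec continuous_const).neg
  obtain ⟨Y, hY0, hY⟩ := exists_forall_mem_Icc_hasDerivAt_clm_apply hA hab (x, v)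
  refine ⟨fun t => (Y t).1, fun t => (Y t).2, ⟨fun t ht => ?_, fun t ht => ?_⟩,
    congrArg Prod.fst hY0, congrArg Prod.snd hY0⟩
  · exact (ContinuousLinearMap.fst ℝ _ _).hasFDerivAt.comp_hasDerivAt t (hY t ht)
  · refine ((ContinuousLinearMap.snd ℝ _ _).hasFDerivAt.comp_hasDerivAt t (hY t ht)).congr_deriv ?_
    simp [A]

theorem exists_isJacobiField_boundaryValue (hR : Continuous R) (hab : a < b)
    (huniq : ∀ y dy, IsJacobiField R (Icc a b) y dy → y a = 0 → y b = 0 → EqOn y 0 (Icc a b))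
    (v : ι → ℝ) : ∃ y dy, IsJacobiField R (Icc a b) y dy ∧ y a = 0 ∧ y b = v := by
  classical
  choose y dy hy hy0 hdy0 using fun j : ι =>
    exists_isJacobiField_initialValue hR hab.le 0 (Pi.single j 1)
  set L := Fintype.linearCombination ℝ fun j => y j b
  have hL : Function.Injective L := by
    refine (injective_iff_map_eq_zero L).2 fun c hc => ?_
    have hsol := IsJacobiField.sum_smul hy c
    have hzero := huniq _ _ hsol (by simp [hy0]) (by rwa [Fintype.linearCombination_apply] at hc)
    have := (hsol.1 a (left_mem_Icc.2 hab.le)).eq_zero_of_eqOn_Icc hab hzero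
    simpa [hdy0, ← pi_eq_sum_univ'] using this
  obtain ⟨c, hc⟩ := LinearMap.injective_iff_surjective.1 hL v
  exact ⟨_, _, IsJacobiField.sum_smul hy c, by simp [hy0],
    by rwa [Fintype.linearCombination_apply] at hc⟩

end Jacobi

theorem jacobi_bvp_exists_unique_general {m : ℕ} {ρ r : ℝ}
    (hr : 0 < r) (hρr : Real.sqrt ρ * r < Real.pi)
    (R : ℝ → Matrix (Fin m) (Fin m) ℝ)
    (hRcont : ∀ i j, Continuous fun t => R t i j)
    (hRle : ∀ t ∈ Set.Icc (0:ℝ) r,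
      (ρ • (1 : Matrix (Fin m) (Fin m) ℝ) - R t).PosSemidef)
    (v : Fin m → ℝ) :
    (∃ y dy : ℝ → Fin m → ℝ,
      (∀ t ∈ Set.Icc (0:ℝ) r, HasDerivAt y (dy t) t) ∧
      (∀ t ∈ Set.Icc (0:ℝ) r, HasDerivAt dy (-(R t).mulVec (y t)) t) ∧
      y 0 = 0 ∧ y r = v) ∧
    (∀ y dy z dz : ℝ → Fin m → ℝ,
      (∀ t ∈ Set.Icc (0:ℝ) r, HasDerivAt y (dy t) t) →
      (∀ t ∈ Set.Icc (0:ℝ) r, HasDerivAt dy (-(R t).mulVec (y t)) t) →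
      y 0 = 0 → y r = v →
      (∀ t ∈ Set.Icc (0:ℝ) r, HasDerivAt z (dz t) t) →
      (∀ t ∈ Set.Icc (0:ℝ) r, HasDerivAt dz (-(R t).mulVec (z t)) t) →
      z 0 = 0 → z r = v →
      ∀ t ∈ Set.Icc (0:ℝ) r, y t = z t) := by
  obtain ⟨k, hρk, hkr⟩ := exists_between ((lt_div_iff₀ hr).2 hρr)
  have hk : |k| * (r - 0) < π := by
    rw [abs_of_pos ((sqrt_nonneg ρ).trans_lt hρk), sub_zero]
    exact (lt_div_iff₀ hr).1 hkr
  have huniq (y dy) (hy : IsJacobiField R (Icc 0 r) y dy) (h0 : y 0 = 0) (hr' : y r = 0) :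
      EqOn y 0 (Icc 0 r) :=
    hy.eqOn_zero h0 hr' hRle (lt_sq_of_sqrt_lt hρk) hk
  have hRcont' : Continuous R := continuous_pi fun i => continuous_pi (hRcont i)
  obtain ⟨y, dy, hy, hy0, hyr⟩ := exists_isJacobiField_boundaryValue hRcont' hr huniq v
  refine ⟨⟨y, dy, hy.1, hy.2, hy0, hyr⟩, fun y dy z dz hy hdy hy0 hyr hz hdz hz0 hzr t ht => ?_⟩
  exact sub_eq_zero.1 (huniq _ _ (IsJacobiField.sub ⟨hy, hdy⟩ ⟨hz, hdz⟩)
    (by rw [hy0, hz0, sub_self]) (by rw [hyr, hzr, sub_self]) ht)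

/-- Existence and uniqueness for the Jacobi boundary value problem:
if `R : [0,r] → Sym(n−1)` is continuous with `R(t) ≤ ρI`, `0 ≤ ρ`, `0 < r`,
`√ρ·r < π`, then for each `v` the problem `y'' = −R(t)y`, `y(0) = 0`,
`y(r) = v` has a solution, unique on `[0,r]`. -/
theorem jacobi_bvp_exists_unique {m : ℕ} {ρ r : ℝ}
    (hρ : 0 ≤ ρ) (hr : 0 < r) (hρr : Real.sqrt ρ * r < Real.pi)
    (R : ℝ → Matrix (Fin m) (Fin m) ℝ)
    (hRcont : ∀ i j, Continuous fun t => R t i j)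
    (hRsymm : ∀ t ∈ Set.Icc (0:ℝ) r, (R t).IsSymm)
    (hRle : ∀ t ∈ Set.Icc (0:ℝ) r,
      (ρ • (1 : Matrix (Fin m) (Fin m) ℝ) - R t).PosSemidef)
    (v : Fin m → ℝ) :
    (∃ y dy : ℝ → Fin m → ℝ,
      (∀ t ∈ Set.Icc (0:ℝ) r, HasDerivAt y (dy t) t) ∧
      (∀ t ∈ Set.Icc (0:ℝ) r, HasDerivAt dy (-(R t).mulVec (y t)) t) ∧
      y 0 = 0 ∧ y r = v) ∧
    (∀ y dy z dz : ℝ → Fin m → ℝ,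
      (∀ t ∈ Set.Icc (0:ℝ) r, HasDerivAt y (dy t) t) →
      (∀ t ∈ Set.Icc (0:ℝ) r, HasDerivAt dy (-(R t).mulVec (y t)) t) →
      y 0 = 0 → y r = v →
      (∀ t ∈ Set.Icc (0:ℝ) r, HasDerivAt z (dz t) t) →
      (∀ t ∈ Set.Icc (0:ℝ) r, HasDerivAt dz (-(R t).mulVec (z t)) t) →
      z 0 = 0 → z r = v →
      ∀ t ∈ Set.Icc (0:ℝ) r, y t = z t) :=
  jacobi_bvp_exists_unique_general hr hρr R hRcont hRle v
end

section
/- Fix a continuous map Y : [0,r] → GL_{n−1}(ℝ) and α > 0. Among all continuous symmetric-matrix-valued functions A : [0,r] → Sym(n−1) with Tr(A(t)) ≥ α for all t, the functional ∫₀ʳ Tr(A(t)² Y(t)Y(t)ᵀ) dt is minimized pointwise, and its unique minimizer is A(t) = α (Y(t)Y(t)ᵀ)^{-1} / Tr((Y(t)Y(t)ᵀ)^{-1}); moreover this minimizer is positive definite and satisfies Tr(A(t)) = α. -/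
/-!
Write `A = A₀ + D` with `A₀ = c Z⁻¹`, `c = α / tr Z⁻¹`. Since `A₀ Z = c I`, the cross terms
of `tr(A² Z)` collapse to `2 c tr D = 2 c (tr A - α) ≥ 0`, leaving
`tr(A² Z) = tr(A₀² Z) + 2 c (tr A - α) + tr(D Z D)`, and `tr(D Z D) = tr(Dᴴ Z D) > 0` unless
`D = 0` because `Z` is positive definite. So `A₀(t)` minimizes the integrand at every `t`,
strictly unless `A(t) = A₀(t)`, and continuity turns a strict pointwise gap into a strict gap
of integrals.
-/

open Matrix
open scoped ComplexOrder

namespace Matrix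

variable {n : Type*} [Fintype n] [DecidableEq n]

theorem trace_sq_mul_smul_inv_add {R : Type*} [CommRing R] {Z : Matrix n n R} (hZ : IsUnit Z.det)
    (c : R) (D : Matrix n n R) :
    ((c • Z⁻¹ + D) ^ 2 * Z).trace =
      ((c • Z⁻¹) ^ 2 * Z).trace + 2 * c * D.trace + (D * Z * D).trace := by
  have hcross : (c • Z⁻¹ * D * Z).trace = c * D.trace := by
    rw [trace_mul_comm, ← Matrix.mul_assoc, mul_smul_comm, mul_nonsing_inv Z hZ, smul_mul_assoc,
      one_mul, trace_smul, smul_eq_mul]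
  have hcross' : (D * (c • Z⁻¹) * Z).trace = c * D.trace := by
    rw [Matrix.mul_assoc, smul_mul_assoc, nonsing_inv_mul Z hZ, mul_smul_comm, mul_one, trace_smul,
      smul_eq_mul]
  have hsq : (D * D * Z).trace = (D * Z * D).trace := by
    rw [Matrix.mul_assoc, trace_mul_comm]
  rw [sq, sq, add_mul, mul_add, mul_add, add_mul, add_mul, add_mul, trace_add, trace_add,
    trace_add, hcross, hcross', hsq]
  ring

theorem PosDef.trace_conjTranspose_mul_mul_same_eq_zero_iff {𝕜 : Type*} [RCLike 𝕜]
    {A : Matrix n n 𝕜} (hA : A.PosDef) {B : Matrix n n 𝕜} :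
    (Bᴴ * A * B).trace = 0 ↔ B = 0 := by
  refine ⟨fun h => ?_, fun h => by simp [h]⟩
  have hzero : Bᴴ * A * B = 0 :=
    (hA.posSemidef.conjTranspose_mul_mul_same B).trace_eq_zero_iff.mp h
  refine ext_iff_mulVec.mpr fun x => ?_
  by_contra hne
  have := hA.dotProduct_mulVec_pos (x := B *ᵥ x) (by simpa using hne)
  simp [star_mulVec, dotProduct_mulVec, vecMul_vecMul, ← Matrix.mul_assoc, hzero] at this

end Matrix

namespace Matrix.PosDef

variable {n : Type*} [Fintype n] [DecidableEq n] [Nonempty n] {Z : Matrix n n ℝ}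

theorem trace_div_trace_inv_smul_inv (hZ : Z.PosDef) (α : ℝ) :
    ((α / Z⁻¹.trace) • Z⁻¹).trace = α := by
  rw [trace_smul, smul_eq_mul, div_mul_cancel₀ _ hZ.inv.trace_pos.ne']

theorem trace_sq_mul_eq (hZ : Z.PosDef) (α : ℝ) {A : Matrix n n ℝ} (hA : A.IsSymm) :
    (A ^ 2 * Z).trace = (((α / Z⁻¹.trace) • Z⁻¹) ^ 2 * Z).trace
      + 2 * (α / Z⁻¹.trace) * (A.trace - α)
      + ((A - (α / Z⁻¹.trace) • Z⁻¹)ᴴ * Z * (A - (α / Z⁻¹.trace) • Z⁻¹)).trace := by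
  set A₀ := (α / Z⁻¹.trace) • Z⁻¹
  have hD : (A - A₀).IsHermitian :=
    (isHermitian_iff_isSymm.mpr hA).sub (hZ.isHermitian.inv.smul (IsSelfAdjoint.all _))
  have := trace_sq_mul_smul_inv_add hZ.det_pos.ne'.isUnit (α / Z⁻¹.trace) (A - A₀)
  rw [hD.eq]
  rwa [add_sub_cancel, trace_sub, trace_div_trace_inv_smul_inv hZ] at this

theorem trace_sq_mul_div_trace_inv_smul_inv_lt (hZ : Z.PosDef) {α : ℝ} (hα : 0 ≤ α)
    {A : Matrix n n ℝ} (hA : A.IsSymm) (hAα : α ≤ A.trace) (hne : A ≠ (α / Z⁻¹.trace) • Z⁻¹) :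
    (((α / Z⁻¹.trace) • Z⁻¹) ^ 2 * Z).trace < (A ^ 2 * Z).trace := by
  set D := A - (α / Z⁻¹.trace) • Z⁻¹
  have hslack : 0 ≤ 2 * (α / Z⁻¹.trace) * (A.trace - α) :=
    mul_nonneg (mul_nonneg zero_le_two (div_nonneg hα hZ.inv.trace_pos.le)) (sub_nonneg.mpr hAα)
  have hpos : 0 < (Dᴴ * Z * D).trace :=
    (hZ.posSemidef.conjTranspose_mul_mul_same D).trace_nonneg.lt_of_ne'
      (hZ.trace_conjTranspose_mul_mul_same_eq_zero_iff.not.mpr (sub_ne_zero.mpr hne))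
  rw [hZ.trace_sq_mul_eq α hA]
  linarith

theorem trace_sq_mul_div_trace_inv_smul_inv_le (hZ : Z.PosDef) {α : ℝ} (hα : 0 ≤ α)
    {A : Matrix n n ℝ} (hA : A.IsSymm) (hAα : α ≤ A.trace) :
    (((α / Z⁻¹.trace) • Z⁻¹) ^ 2 * Z).trace ≤ (A ^ 2 * Z).trace := by
  rcases eq_or_ne A ((α / Z⁻¹.trace) • Z⁻¹) with rfl | hne
  · rfl
  · exact (hZ.trace_sq_mul_div_trace_inv_smul_inv_lt hα hA hAα hne).le

end Matrix.PosDef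

theorem Matrix.posDef_mul_transpose_self {n : Type*} [Fintype n] [DecidableEq n]
    {Y : Matrix n n ℝ} (hY : IsUnit Y.det) : (Y * Yᵀ).PosDef := by
  simpa using PosDef.mul_conjTranspose_self Y
    (vecMul_injective_iff_isUnit.mpr ((isUnit_iff_isUnit_det Y).mpr hY))

theorem ContinuousOn.matrix_inv {X n 𝕜 : Type*} [TopologicalSpace X] [Fintype n]
    [DecidableEq n] [NormedField 𝕜] [CompleteSpace 𝕜] {f : X → Matrix n n 𝕜} {s : Set X}
    (hf : ContinuousOn f s) (hdet : ∀ x ∈ s, IsUnit (f x).det) :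
    ContinuousOn (fun x => (f x)⁻¹) s := fun x hx =>
  (continuousAt_matrix_inv _ (NormedRing.inverse_continuousAt (hdet x hx).unit)
    ).comp_continuousWithinAt (hf x hx)

theorem intervalIntegral.eqOn_of_integral_eq_of_le {f g : ℝ → ℝ} {a b : ℝ} (hab : a < b)
    (hfc : ContinuousOn f (Set.Icc a b)) (hgc : ContinuousOn g (Set.Icc a b))
    (hle : ∀ x ∈ Set.Icc a b, f x ≤ g x) (heq : ∫ x in a..b, f x = ∫ x in a..b, g x) :
    Set.EqOn f g (Set.Icc a b) := fun c hc => by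
  by_contra hne
  exact (integral_lt_integral_of_continuousOn_of_le_of_exists_lt hab hfc hgc
    (fun x hx => hle x (Set.Ioc_subset_Icc_self hx)) ⟨c, hc, (hle c hc).lt_of_ne hne⟩).ne heq

theorem Matrix.continuousOn_trace_sq_div_trace_inv_smul_inv_mul {X n : Type*}
    [TopologicalSpace X] [Fintype n] [DecidableEq n] [Nonempty n] {Z : X → Matrix n n ℝ}
    {s : Set X} (hZc : ContinuousOn Z s) (hZ : ∀ x ∈ s, (Z x).PosDef) (α : ℝ) :
    ContinuousOn (fun x => (((α / (Z x)⁻¹.trace) • (Z x)⁻¹) ^ 2 * Z x).trace) s := by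
  have htrace : Continuous (trace : Matrix n n ℝ → ℝ) := continuous_id.matrix_trace
  have hZinvc : ContinuousOn (fun x => (Z x)⁻¹) s :=
    hZc.matrix_inv fun x hx => (hZ x hx).det_pos.ne'.isUnit
  have hc : ContinuousOn (fun x => α / (Z x)⁻¹.trace) s :=
    continuousOn_const.div (htrace.comp_continuousOn hZinvc) fun x hx =>
      (hZ x hx).inv.trace_pos.ne'
  exact htrace.comp_continuousOn (((hc.smul hZinvc).pow 2).mul hZc)

/-- For a continuous family `Y(t)` of invertible matrices and `α > 0`, among
continuous symmetric `A(t)` with `Tr(A(t)) ≥ α`, the functional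
`∫₀ʳ Tr(A(t)² Y(t)Y(t)ᵀ) dt` is minimized pointwise by the unique minimizer
`A₀(t) = α (Y(t)Y(t)ᵀ)⁻¹ / Tr((Y(t)Y(t)ᵀ)⁻¹)`, which moreover is positive
definite with `Tr(A₀(t)) = α`. -/
theorem min_energy_functional_A {m : ℕ} (hm : 1 ≤ m) {r : ℝ} (hr : 0 < r)
    {α : ℝ} (hα : 0 < α)
    (Y : ℝ → Matrix (Fin m) (Fin m) ℝ)
    (hYcont : ∀ i j, Continuous fun t => Y t i j)
    (hYinv : ∀ t ∈ Set.Icc (0:ℝ) r, IsUnit (Y t).det) :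
    let Z := fun t => Y t * (Y t)ᵀ
    let A₀ := fun t => (α / (Z t)⁻¹.trace) • (Z t)⁻¹
    (∀ t ∈ Set.Icc (0:ℝ) r, (A₀ t).PosDef ∧ (A₀ t).trace = α) ∧
    (∀ A : ℝ → Matrix (Fin m) (Fin m) ℝ,
      (∀ i j, Continuous fun t => A t i j) →
      (∀ t ∈ Set.Icc (0:ℝ) r, (A t).IsSymm ∧ α ≤ (A t).trace) →
      (∫ t in (0:ℝ)..r, ((A₀ t) ^ 2 * Z t).trace)
        ≤ ∫ t in (0:ℝ)..r, ((A t) ^ 2 * Z t).trace) ∧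
    (∀ A : ℝ → Matrix (Fin m) (Fin m) ℝ,
      (∀ i j, Continuous fun t => A t i j) →
      (∀ t ∈ Set.Icc (0:ℝ) r, (A t).IsSymm ∧ α ≤ (A t).trace) →
      (∫ t in (0:ℝ)..r, ((A t) ^ 2 * Z t).trace)
        = (∫ t in (0:ℝ)..r, ((A₀ t) ^ 2 * Z t).trace) →
      ∀ t ∈ Set.Icc (0:ℝ) r, A t = A₀ t) := by
  intro Z A₀
  have : Nonempty (Fin m) := ⟨⟨0, hm⟩⟩
  have hZ : ∀ t ∈ Set.Icc 0 r, (Z t).PosDef := fun t ht =>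
    posDef_mul_transpose_self (hYinv t ht)
  have hZc : Continuous Z := by
    have hY : Continuous Y := continuous_matrix hYcont
    exact hY.matrix_mul hY.matrix_transpose
  have hcont₀ : ContinuousOn (fun t => ((A₀ t) ^ 2 * Z t).trace) (Set.Icc 0 r) :=
    continuousOn_trace_sq_div_trace_inv_smul_inv_mul hZc.continuousOn hZ α
  have hcont : ∀ A : ℝ → Matrix (Fin m) (Fin m) ℝ, (∀ i j, Continuous fun t => A t i j) →
      ContinuousOn (fun t => ((A t) ^ 2 * Z t).trace) (Set.Icc 0 r) := fun A hA =>
    (((continuous_matrix hA).pow 2).mul hZc).matrix_trace.continuousOn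
  have hle : ∀ A : ℝ → Matrix (Fin m) (Fin m) ℝ,
      (∀ t ∈ Set.Icc 0 r, (A t).IsSymm ∧ α ≤ (A t).trace) →
      ∀ t ∈ Set.Icc 0 r, ((A₀ t) ^ 2 * Z t).trace ≤ ((A t) ^ 2 * Z t).trace :=
    fun A hA t ht => (hZ t ht).trace_sq_mul_div_trace_inv_smul_inv_le hα.le (hA t ht).1 (hA t ht).2
  refine ⟨fun t ht => ⟨(hZ t ht).inv.smul (div_pos hα (hZ t ht).inv.trace_pos),
    (hZ t ht).trace_div_trace_inv_smul_inv α⟩,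
    fun A hAcont hA => ?_, fun A hAcont hA heq t ht => ?_⟩
  · exact intervalIntegral.integral_mono_on hr.le (hcont₀.intervalIntegrable_of_Icc hr.le)
      ((hcont A hAcont).intervalIntegrable_of_Icc hr.le) (hle A hA)
  · by_contra hne
    exact ((hZ t ht).trace_sq_mul_div_trace_inv_smul_inv_lt hα.le (hA t ht).1 (hA t ht).2
      hne).ne (intervalIntegral.eqOn_of_integral_eq_of_le hr hcont₀ (hcont A hAcont) (hle A hA)
        heq.symm ht)
end

section
/- Let w₁, w₂ be two positive solutions on (0,r₁], (0,r₂] of the same scalar ODE w'' = β(w)/w − ρw (with β a function of position along trajectories in the phase plane), both with w(0) = 0, w increasing, and w(rᵢ) = 1, and with w₁'(0) > w₂'(0) > 0. Then viewed in the phase plane (w, w'), the trajectories cannot cross: w₁'(w₁^{-1}(x)) > w₂'(w₂^{-1}(x)) for all x ∈ (0,1], and hence r₁ = ∫₀¹ dx/w₁'(w₁^{-1}(x)) < r₂ = ∫₀¹ dx/w₂'(w₂^{-1}(x)). Consequently two distinct positive increasing solutions with w(0)=0 cannot satisfy w(r)=1 at the same time r. -/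
/-!
Let `τ` be the time change with `w₂ ∘ τ = w₁`, so `τ' = w₁' / (w₂' ∘ τ)`. For a solution of
`w'' = F(w)` the quantity `w'² - 2 ∫ F(w) dw` is conserved, so, read off at the same position,
the gap `w₁'² - (w₂' ∘ τ)²` is constant; call it `K`. If `K ≤ 0`, then `τ' ≤ 1`, so `τ(s) ≤ s`,
and comparing the slopes `w₁(s)/s = w₂(τ s)/s ≤ w₂(τ s)/τ(s)` as `s → 0⁺` gives
`w₁'(0) ≤ w₂'(0)`, a contradiction. Hence `K > 0`: `w₁' > w₂' ∘ τ` at every position, i.e.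
`τ' > 1`, and `r₂ = τ(r₁) > r₁`.
-/

open Set Filter Topology

theorem StrictMonoOn.exists_continuous_rightInvOn {g : ℝ → ℝ} {a b : ℝ} (hab : a ≤ b)
    (hg : ContinuousOn g (Icc a b)) (hmono : StrictMonoOn g (Icc a b)) :
    ∃ σ : ℝ → ℝ, Continuous σ ∧ MapsTo σ (Icc (g a) (g b)) (Icc a b) ∧
      RightInvOn σ g (Icc (g a) (g b)) := by
  have hsurj : SurjOn g (Icc a b) (Icc (g a) (g b)) := intermediate_value_Icc hab hg
  let e : Icc a b ≃o Icc (g a) (g b) :=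
    StrictMono.orderIsoOfSurjective (hmono.monotoneOn.mapsTo_Icc.restrict g _ _)
      (fun x y hxy => hmono x.2 y.2 hxy)
      (fun y => let ⟨x, hx, hxy⟩ := hsurj y.2; ⟨⟨x, hx⟩, Subtype.ext hxy⟩)
  have hgab : g a ≤ g b := hmono.monotoneOn (left_mem_Icc.2 hab) (right_mem_Icc.2 hab) hab
  refine ⟨IccExtend hgab (Subtype.val ∘ e.symm),
    (continuous_subtype_val.comp e.symm.continuous).Icc_extend', fun y hy => ?_, fun y hy => ?_⟩
  · rw [IccExtend_of_mem _ _ hy]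
    exact (e.symm ⟨y, hy⟩).2
  · rw [IccExtend_of_mem _ _ hy]
    exact congrArg Subtype.val (e.apply_symm_apply ⟨y, hy⟩)

theorem HasDerivAt.tendsto_div_self_nhdsGT_zero {f : ℝ → ℝ} {f' : ℝ} (hf : HasDerivAt f f' 0)
    (h0 : f 0 = 0) : Tendsto (fun s => f s / s) (𝓝[>] 0) (𝓝 f') := by
  simpa [h0, div_eq_inv_mul] using hf.tendsto_slope_zero_right

theorem le_of_hasDerivAt_of_comp_le_self {f g τ : ℝ → ℝ} {f' g' : ℝ}
    (hf : HasDerivAt f f' 0) (hg : HasDerivAt g g' 0) (hf0 : f 0 = 0) (hg0 : g 0 = 0)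
    (hτ : Tendsto τ (𝓝[>] 0) (𝓝[>] 0))
    (h : ∀ᶠ s in 𝓝[>] 0, g (τ s) = f s ∧ 0 ≤ f s ∧ τ s ≤ s) : f' ≤ g' := by
  refine le_of_tendsto_of_tendsto (hf.tendsto_div_self_nhdsGT_zero hf0)
    ((hg.tendsto_div_self_nhdsGT_zero hg0).comp hτ) ?_
  filter_upwards [h, hτ self_mem_nhdsWithin] with s ⟨hcomp, hf_nonneg, hτs⟩ (hτpos : 0 < τ s)
  rw [Function.comp_apply, hcomp]
  exact div_le_div_of_nonneg_left hf_nonneg hτpos hτs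

theorem sub_le_sub_of_hasDerivAt_le_one {τ τ' : ℝ → ℝ} {a b : ℝ} (hab : a < b)
    (hc : ContinuousOn τ (Icc a b)) (hd : ∀ x ∈ Ioo a b, HasDerivAt τ (τ' x) x)
    (hle : ∀ x ∈ Ioo a b, τ' x ≤ 1) : τ b - τ a ≤ b - a := by
  obtain ⟨c, hc, hslope⟩ := exists_hasDerivAt_eq_slope τ τ' hab hc hd
  rw [← div_le_one (sub_pos.2 hab), ← hslope]
  exact hle c hc

theorem sub_lt_sub_of_one_lt_hasDerivAt {τ τ' : ℝ → ℝ} {a b : ℝ} (hab : a < b)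
    (hc : ContinuousOn τ (Icc a b)) (hd : ∀ x ∈ Ioo a b, HasDerivAt τ (τ' x) x)
    (hlt : ∀ x ∈ Ioo a b, 1 < τ' x) : b - a < τ b - τ a := by
  obtain ⟨c, hc, hslope⟩ := exists_hasDerivAt_eq_slope τ τ' hab hc hd
  rw [← one_lt_div (sub_pos.2 hab), ← hslope]
  exact hlt c hc

/-- Along `w'' = F(w)`, `d(w'²)/dw = 2 F(w)` depends on the position only, so squared velocities
of two solutions, compared at equal positions, differ by a constant. -/
theorem hasDerivAt_sq_sub_sq_comp_eq_zero {F u₁ v₁ u₂ v₂ τ : ℝ → ℝ} {s : ℝ}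
    (hv₁ : HasDerivAt v₁ (F (u₁ s)) s) (hv₂ : HasDerivAt v₂ (F (u₂ (τ s))) (τ s))
    (hτ : HasDerivAt τ (v₁ s / v₂ (τ s)) s) (hu : u₂ (τ s) = u₁ s) (hv₂s : v₂ (τ s) ≠ 0) :
    HasDerivAt (fun t => v₁ t ^ 2 - v₂ (τ t) ^ 2) 0 s := by
  refine ((hv₁.pow 2).sub ((hv₂.comp s hτ).pow 2)).congr_deriv ?_
  rw [Function.comp_apply, hu]
  field_simp
  ring

structure IsIncreasingTrajectory (r : ℝ) (w dw : ℝ → ℝ) : Prop where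
  pos_r : 0 < r
  hasDerivAt : ∀ t ∈ Icc 0 r, HasDerivAt w (dw t) t
  apply_zero : w 0 = 0
  apply_endpoint : w r = 1
  pos : ∀ t ∈ Ioc 0 r, 0 < w t ∧ 0 < dw t

/-- `τ s` is the time at which `w₂` reaches the position `w₁ s`. -/
structure IsTimeChange (r₁ r₂ : ℝ) (w₁ dw₁ w₂ dw₂ τ : ℝ → ℝ) : Prop where
  continuousOn : ContinuousOn τ (Icc 0 r₁)
  mapsTo : MapsTo τ (Icc 0 r₁) (Icc 0 r₂)
  comp_eq : ∀ s ∈ Icc 0 r₁, w₂ (τ s) = w₁ s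
  hasDerivAt : ∀ s ∈ Ioo 0 r₁, HasDerivAt τ (dw₁ s / dw₂ (τ s)) s

section

variable {F : ℝ → ℝ} {r r₁ r₂ : ℝ} {w dw w₁ dw₁ w₂ dw₂ τ : ℝ → ℝ}

namespace IsIncreasingTrajectory

theorem continuousOn (h : IsIncreasingTrajectory r w dw) : ContinuousOn w (Icc 0 r) :=
  fun t ht => (h.hasDerivAt t ht).continuousAt.continuousWithinAt

theorem strictMonoOn (h : IsIncreasingTrajectory r w dw) : StrictMonoOn w (Icc 0 r) := by
  refine strictMonoOn_of_deriv_pos (convex_Icc 0 r) h.continuousOn fun t ht => ?_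
  rw [interior_Icc] at ht
  rw [(h.hasDerivAt t (Ioo_subset_Icc_self ht)).deriv]
  exact (h.pos t (Ioo_subset_Ioc_self ht)).2

theorem mapsTo (h : IsIncreasingTrajectory r w dw) : MapsTo w (Icc 0 r) (Icc 0 1) := by
  simpa only [h.apply_zero, h.apply_endpoint] using h.strictMonoOn.monotoneOn.mapsTo_Icc

theorem lt_one (h : IsIncreasingTrajectory r w dw) {t : ℝ} (ht : t ∈ Ico 0 r) : w t < 1 :=
  h.apply_endpoint ▸ h.strictMonoOn (Ico_subset_Icc_self ht) (right_mem_Icc.2 h.pos_r.le) ht.2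

theorem exists_isTimeChange (h₁ : IsIncreasingTrajectory r₁ w₁ dw₁)
    (h₂ : IsIncreasingTrajectory r₂ w₂ dw₂) : ∃ τ, IsTimeChange r₁ r₂ w₁ dw₁ w₂ dw₂ τ := by
  obtain ⟨σ, hσc, hσmaps, hσinv⟩ :=
    h₂.strictMonoOn.exists_continuous_rightInvOn h₂.pos_r.le h₂.continuousOn
  rw [h₂.apply_zero, h₂.apply_endpoint] at hσmaps hσinv
  refine ⟨σ ∘ w₁, hσc.comp_continuousOn h₁.continuousOn, hσmaps.comp h₁.mapsTo,
    fun s hs => hσinv (h₁.mapsTo hs), fun s hs => ?_⟩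
  have hw₁s : w₁ s ∈ Ioo 0 1 :=
    ⟨(h₁.pos s (Ioo_subset_Ioc_self hs)).1, h₁.lt_one (Ioo_subset_Ico_self hs)⟩
  have hσs : σ (w₁ s) ∈ Ioc 0 r₂ := by
    refine ⟨(hσmaps (Ioo_subset_Icc_self hw₁s)).1.lt_of_ne fun h0 => hw₁s.1.ne ?_,
      (hσmaps (Ioo_subset_Icc_self hw₁s)).2⟩
    rw [← hσinv (Ioo_subset_Icc_self hw₁s), ← h0, h₂.apply_zero]
  have hσ' : HasDerivAt σ (dw₂ (σ (w₁ s)))⁻¹ (w₁ s) :=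
    HasDerivAt.of_local_left_inverse hσc.continuousAt
      (h₂.hasDerivAt _ (Ioc_subset_Icc_self hσs)) (h₂.pos _ hσs).2.ne'
      (eventually_of_mem (Icc_mem_nhds hw₁s.1 hw₁s.2) hσinv)
  rw [Function.comp_apply, div_eq_inv_mul]
  exact hσ'.comp s (h₁.hasDerivAt s (Ioo_subset_Icc_self hs))

end IsIncreasingTrajectory

namespace IsTimeChange

theorem eq_of_comp_eq (hτ : IsTimeChange r₁ r₂ w₁ dw₁ w₂ dw₂ τ)
    (h₂ : IsIncreasingTrajectory r₂ w₂ dw₂) {s t : ℝ} (hs : s ∈ Icc 0 r₁) (ht : t ∈ Icc 0 r₂)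
    (h : w₂ t = w₁ s) : t = τ s :=
  h₂.strictMonoOn.injOn ht (hτ.mapsTo hs) (h.trans (hτ.comp_eq s hs).symm)

theorem apply_zero (hτ : IsTimeChange r₁ r₂ w₁ dw₁ w₂ dw₂ τ)
    (h₁ : IsIncreasingTrajectory r₁ w₁ dw₁) (h₂ : IsIncreasingTrajectory r₂ w₂ dw₂) : τ 0 = 0 :=
  (hτ.eq_of_comp_eq h₂ (left_mem_Icc.2 h₁.pos_r.le) (left_mem_Icc.2 h₂.pos_r.le)
    (h₂.apply_zero.trans h₁.apply_zero.symm)).symm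

theorem apply_endpoint (hτ : IsTimeChange r₁ r₂ w₁ dw₁ w₂ dw₂ τ)
    (h₁ : IsIncreasingTrajectory r₁ w₁ dw₁) (h₂ : IsIncreasingTrajectory r₂ w₂ dw₂) : τ r₁ = r₂ :=
  (hτ.eq_of_comp_eq h₂ (right_mem_Icc.2 h₁.pos_r.le) (right_mem_Icc.2 h₂.pos_r.le)
    (h₂.apply_endpoint.trans h₁.apply_endpoint.symm)).symm

theorem mem_Ioc (hτ : IsTimeChange r₁ r₂ w₁ dw₁ w₂ dw₂ τ)
    (h₁ : IsIncreasingTrajectory r₁ w₁ dw₁) (h₂ : IsIncreasingTrajectory r₂ w₂ dw₂) {s : ℝ}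
    (hs : s ∈ Ioc 0 r₁) : τ s ∈ Ioc 0 r₂ := by
  have hτs := hτ.mapsTo (Ioc_subset_Icc_self hs)
  refine ⟨hτs.1.lt_of_ne fun h0 => (h₁.pos s hs).1.ne ?_, hτs.2⟩
  rw [← hτ.comp_eq s (Ioc_subset_Icc_self hs), ← h0, h₂.apply_zero]

theorem sq_sub_sq_eq_endpoint (hτ : IsTimeChange r₁ r₂ w₁ dw₁ w₂ dw₂ τ)
    (h₁ : IsIncreasingTrajectory r₁ w₁ dw₁) (h₂ : IsIncreasingTrajectory r₂ w₂ dw₂)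
    (hF₁ : ∀ t ∈ Ioc 0 r₁, HasDerivAt dw₁ (F (w₁ t)) t)
    (hF₂ : ∀ t ∈ Ioc 0 r₂, HasDerivAt dw₂ (F (w₂ t)) t) {s : ℝ} (hs : s ∈ Ioc 0 r₁) :
    dw₁ s ^ 2 - dw₂ (τ s) ^ 2 = dw₁ r₁ ^ 2 - dw₂ r₂ ^ 2 := by
  have hsub : Icc s r₁ ⊆ Ioc 0 r₁ := Icc_subset_Ioc_iff hs.2 |>.2 ⟨hs.1, le_rfl⟩
  have hcont : ContinuousOn (fun u => dw₁ u ^ 2 - dw₂ (τ u) ^ 2) (Icc s r₁) := fun t ht =>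
    ((hF₁ t (hsub ht)).continuousAt.continuousWithinAt.pow 2).sub
      (((hF₂ _ (hτ.mem_Ioc h₁ h₂ (hsub ht))).continuousAt.comp_continuousWithinAt
        (hτ.continuousOn.mono (hsub.trans Ioc_subset_Icc_self) t ht)).pow 2)
  have hderiv : ∀ t ∈ Ico s r₁,
      HasDerivWithinAt (fun u => dw₁ u ^ 2 - dw₂ (τ u) ^ 2) 0 (Ici t) t := fun t ht =>
        have ht' : t ∈ Ioo 0 r₁ := ⟨hs.1.trans_le ht.1, ht.2⟩
        have hτt := hτ.mem_Ioc h₁ h₂ (Ioo_subset_Ioc_self ht')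
        (hasDerivAt_sq_sub_sq_comp_eq_zero (hF₁ t (Ioo_subset_Ioc_self ht')) (hF₂ _ hτt)
          (hτ.hasDerivAt t ht') (hτ.comp_eq t (Ioo_subset_Icc_self ht'))
          (h₂.pos _ hτt).2.ne').hasDerivWithinAt
  rw [← hτ.apply_endpoint h₁ h₂]
  exact (constant_of_has_deriv_right_zero hcont hderiv r₁ (right_mem_Icc.2 hs.2)).symm

theorem tendsto_nhdsGT_zero (hτ : IsTimeChange r₁ r₂ w₁ dw₁ w₂ dw₂ τ)
    (h₁ : IsIncreasingTrajectory r₁ w₁ dw₁) (h₂ : IsIncreasingTrajectory r₂ w₂ dw₂) :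
    Tendsto τ (𝓝[>] 0) (𝓝[>] 0) := by
  refine tendsto_nhdsWithin_iff.2 ⟨?_, ?_⟩
  · have := (hτ.continuousOn 0 (left_mem_Icc.2 h₁.pos_r.le)).mono_of_mem_nhdsWithin
      (Icc_mem_nhdsGT h₁.pos_r)
    rwa [ContinuousWithinAt, hτ.apply_zero h₁ h₂] at this
  · filter_upwards [Ioc_mem_nhdsGT h₁.pos_r] with s hs using (hτ.mem_Ioc h₁ h₂ hs).1

theorem le_self_of_deriv_le (hτ : IsTimeChange r₁ r₂ w₁ dw₁ w₂ dw₂ τ)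
    (h₁ : IsIncreasingTrajectory r₁ w₁ dw₁) (h₂ : IsIncreasingTrajectory r₂ w₂ dw₂)
    (hle : ∀ s ∈ Ioo 0 r₁, dw₁ s ≤ dw₂ (τ s)) {s : ℝ} (hs : s ∈ Ioo 0 r₁) : τ s ≤ s := by
  have hsub : Ioo 0 s ⊆ Ioo 0 r₁ := Ioo_subset_Ioo_right hs.2.le
  have := sub_le_sub_of_hasDerivAt_le_one hs.1
    (hτ.continuousOn.mono (Icc_subset_Icc_right hs.2.le)) (fun x hx => hτ.hasDerivAt x (hsub hx))
    fun x hx => (div_le_one (h₂.pos _ (hτ.mem_Ioc h₁ h₂ (Ioo_subset_Ioc_self (hsub hx)))).2).2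
      (hle x (hsub hx))
  rwa [hτ.apply_zero h₁ h₂, sub_zero, sub_zero] at this

theorem sq_sub_sq_endpoint_pos (hτ : IsTimeChange r₁ r₂ w₁ dw₁ w₂ dw₂ τ)
    (h₁ : IsIncreasingTrajectory r₁ w₁ dw₁) (h₂ : IsIncreasingTrajectory r₂ w₂ dw₂)
    (hF₁ : ∀ t ∈ Ioc 0 r₁, HasDerivAt dw₁ (F (w₁ t)) t)
    (hF₂ : ∀ t ∈ Ioc 0 r₂, HasDerivAt dw₂ (F (w₂ t)) t) (h0 : dw₂ 0 < dw₁ 0) :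
    0 < dw₁ r₁ ^ 2 - dw₂ r₂ ^ 2 := by
  by_contra! hK
  have hle : ∀ s ∈ Ioo 0 r₁, dw₁ s ≤ dw₂ (τ s) := fun s hs => by
    have hs' := Ioo_subset_Ioc_self hs
    rw [← pow_le_pow_iff_left₀ (h₁.pos s hs').2.le (h₂.pos _ (hτ.mem_Ioc h₁ h₂ hs')).2.le
      two_ne_zero]
    linarith [hτ.sq_sub_sq_eq_endpoint h₁ h₂ hF₁ hF₂ hs']
  have := le_of_hasDerivAt_of_comp_le_self (h₁.hasDerivAt 0 (left_mem_Icc.2 h₁.pos_r.le))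
    (h₂.hasDerivAt 0 (left_mem_Icc.2 h₂.pos_r.le)) h₁.apply_zero h₂.apply_zero
    (hτ.tendsto_nhdsGT_zero h₁ h₂) <| by
      filter_upwards [Ioo_mem_nhdsGT h₁.pos_r] with s hs
      exact ⟨hτ.comp_eq s (Ioo_subset_Icc_self hs), (h₁.pos s (Ioo_subset_Ioc_self hs)).1.le,
        hτ.le_self_of_deriv_le h₁ h₂ hle hs⟩
  linarith

theorem deriv_comp_lt (hτ : IsTimeChange r₁ r₂ w₁ dw₁ w₂ dw₂ τ)
    (h₁ : IsIncreasingTrajectory r₁ w₁ dw₁) (h₂ : IsIncreasingTrajectory r₂ w₂ dw₂)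
    (hF₁ : ∀ t ∈ Ioc 0 r₁, HasDerivAt dw₁ (F (w₁ t)) t)
    (hF₂ : ∀ t ∈ Ioc 0 r₂, HasDerivAt dw₂ (F (w₂ t)) t) (h0 : dw₂ 0 < dw₁ 0) {s : ℝ}
    (hs : s ∈ Ioc 0 r₁) : dw₂ (τ s) < dw₁ s := by
  refine lt_of_pow_lt_pow_left₀ 2 (h₁.pos s hs).2.le ?_
  linarith [hτ.sq_sub_sq_eq_endpoint h₁ h₂ hF₁ hF₂ hs, hτ.sq_sub_sq_endpoint_pos h₁ h₂ hF₁ hF₂ h0]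

end IsTimeChange

end

theorem phase_plane_no_crossing_general {ρ r₁ r₂ : ℝ}
    (hr₁ : 0 < r₁) (hr₂ : 0 < r₂)
    (β : ℝ → ℝ)
    (w₁ dw₁ w₂ dw₂ : ℝ → ℝ)
    (hw₁ : ∀ t ∈ Icc (0:ℝ) r₁, HasDerivAt w₁ (dw₁ t) t)
    (hdw₁ : ∀ t ∈ Ioc (0:ℝ) r₁,
      HasDerivAt dw₁ (β (w₁ t) / w₁ t - ρ * w₁ t) t)
    (hw₂ : ∀ t ∈ Icc (0:ℝ) r₂, HasDerivAt w₂ (dw₂ t) t)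
    (hdw₂ : ∀ t ∈ Ioc (0:ℝ) r₂,
      HasDerivAt dw₂ (β (w₂ t) / w₂ t - ρ * w₂ t) t)
    (hw₁0 : w₁ 0 = 0) (hw₂0 : w₂ 0 = 0)
    (hw₁r : w₁ r₁ = 1) (hw₂r : w₂ r₂ = 1)
    (hpos₁ : ∀ t ∈ Ioc (0:ℝ) r₁, 0 < w₁ t ∧ 0 < dw₁ t)
    (hpos₂ : ∀ t ∈ Ioc (0:ℝ) r₂, 0 < w₂ t ∧ 0 < dw₂ t)
    (h0 : dw₁ 0 > dw₂ 0) :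
    (∀ t₁ ∈ Ioc (0:ℝ) r₁, ∀ t₂ ∈ Ioc (0:ℝ) r₂,
      w₁ t₁ = w₂ t₂ → dw₂ t₂ < dw₁ t₁) ∧
    r₁ < r₂ := by
  have h₁ : IsIncreasingTrajectory r₁ w₁ dw₁ := ⟨hr₁, hw₁, hw₁0, hw₁r, hpos₁⟩
  have h₂ : IsIncreasingTrajectory r₂ w₂ dw₂ := ⟨hr₂, hw₂, hw₂0, hw₂r, hpos₂⟩
  obtain ⟨τ, hτ⟩ := h₁.exists_isTimeChange h₂
  have hfaster : ∀ s ∈ Ioc 0 r₁, dw₂ (τ s) < dw₁ s :=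
    fun s hs => hτ.deriv_comp_lt (F := fun x => β x / x - ρ * x) h₁ h₂ hdw₁ hdw₂ h0 hs
  refine ⟨fun t₁ ht₁ t₂ ht₂ heq => ?_, ?_⟩
  · rw [hτ.eq_of_comp_eq h₂ (Ioc_subset_Icc_self ht₁) (Ioc_subset_Icc_self ht₂) heq.symm]
    exact hfaster t₁ ht₁
  · have := sub_lt_sub_of_one_lt_hasDerivAt hr₁ hτ.continuousOn hτ.hasDerivAt fun s hs =>
      (one_lt_div (h₂.pos _ (hτ.mem_Ioc h₁ h₂ (Ioo_subset_Ioc_self hs))).2).2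
        (hfaster s (Ioo_subset_Ioc_self hs))
    rwa [hτ.apply_zero h₁ h₂, hτ.apply_endpoint h₁ h₂, sub_zero, sub_zero] at this

/-- Phase-plane non-crossing and uniqueness for `w'' = β(w)/w − ρw` (with `β`
a function of position `w`): if `w₁, w₂` are positive increasing solutions
with `wᵢ(0) = 0`, `wᵢ(rᵢ) = 1` and `w₁'(0) > w₂'(0) > 0`, then their
phase-plane trajectories cannot cross — whenever `w₁(t₁) = w₂(t₂)` with
`t₁ ∈ (0,r₁]`, `t₂ ∈ (0,r₂]`, one has `w₁'(t₁) > w₂'(t₂)` — and consequently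
the traversal times satisfy `r₁ < r₂`; in particular two distinct such
solutions cannot reach `w = 1` at the same time. -/
theorem phase_plane_no_crossing {ρ r₁ r₂ : ℝ} (hρ : 0 ≤ ρ)
    (hr₁ : 0 < r₁) (hr₂ : 0 < r₂)
    (β : ℝ → ℝ) (hβ : ∀ x ∈ Ioc (0:ℝ) 1, 0 ≤ β x)
    (w₁ dw₁ w₂ dw₂ : ℝ → ℝ)
    (hw₁ : ∀ t ∈ Icc (0:ℝ) r₁, HasDerivAt w₁ (dw₁ t) t)
    (hdw₁ : ∀ t ∈ Ioc (0:ℝ) r₁,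
      HasDerivAt dw₁ (β (w₁ t) / w₁ t - ρ * w₁ t) t)
    (hw₂ : ∀ t ∈ Icc (0:ℝ) r₂, HasDerivAt w₂ (dw₂ t) t)
    (hdw₂ : ∀ t ∈ Ioc (0:ℝ) r₂,
      HasDerivAt dw₂ (β (w₂ t) / w₂ t - ρ * w₂ t) t)
    (hw₁0 : w₁ 0 = 0) (hw₂0 : w₂ 0 = 0)
    (hw₁r : w₁ r₁ = 1) (hw₂r : w₂ r₂ = 1)
    (hpos₁ : ∀ t ∈ Ioc (0:ℝ) r₁, 0 < w₁ t ∧ 0 < dw₁ t)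
    (hpos₂ : ∀ t ∈ Ioc (0:ℝ) r₂, 0 < w₂ t ∧ 0 < dw₂ t)
    (h0 : dw₁ 0 > dw₂ 0) (h0' : dw₂ 0 > 0) :
    (∀ t₁ ∈ Ioc (0:ℝ) r₁, ∀ t₂ ∈ Ioc (0:ℝ) r₂,
      w₁ t₁ = w₂ t₂ → dw₂ t₂ < dw₁ t₁) ∧
    r₁ < r₂ :=
  phase_plane_no_crossing_general hr₁ hr₂ β w₁ dw₁ w₂ dw₂ hw₁ hdw₁ hw₂ hdw₂ hw₁0 hw₂0 hw₁r hw₂r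
    hpos₁ hpos₂ h0
end

section
/- Let ρ ≥ 0, √ρ·r < π, κ ≤ ρ, and suppose R : [0,r] → Sym(n−1) is continuous with R(t) ≤ ρI for all t. If Y solves Y'' = −R(t)Y with Y(0)=0, Y(r)=I, then Tr(Y'(r)) = E(R,Y) ≥ min over Z of E(ρI, Z) = (n−1)√ρ cot(√ρ r) when ρ > 0 (and (n−1)/r when ρ = 0). In particular, (log s(r))' ≥ (log s_ρ(r))' (the usual Günther inequality in ODE form). -/
/-!
Let `c` solve the model Riccati equation `c' = -ρ - c²` with `t c(t) → 1` at `0⁺`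
(`c = 1/t` for `ρ = 0`, `c = √ρ cot (√ρ t)` for `ρ > 0`). Along any `y` with `y'' = -R y`,
`y(0) = 0` and `R ≤ ρ`, the function `F = ⟪y, y'⟫ - c ‖y‖²` satisfies
`F' = ‖y' - c y‖² + ⟪y, (ρ - R) y⟫ ≥ 0` and `F → 0` at `0⁺`, so `F(r) ≥ 0`.
Summing this over the columns of `Y`, where `Y(r) = I`, gives `Tr Y'(r) ≥ (n - 1) c(r)`.
-/

open Matrix Set Real

attribute [local instance] Matrix.normedAddCommGroup Matrix.normedSpace

open Filter Topology
open scoped RealInnerProductSpace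

lemma nonneg_of_monotoneOn_Ioc_of_tendsto {F : ℝ → ℝ} {r : ℝ} (hr : 0 < r)
    (hF : MonotoneOn F (Ioc 0 r)) (h0 : Tendsto F (𝓝[>] 0) (𝓝 0)) : 0 ≤ F r :=
  le_of_tendsto h0 <| by
    filter_upwards [Ioo_mem_nhdsGT hr] with t ht
    exact hF ⟨ht.1, ht.2.le⟩ ⟨hr, le_rfl⟩ ht.2.le

section Riccati

variable {E : Type*} [NormedAddCommGroup E] [InnerProductSpace ℝ E]

lemma tendsto_mul_norm_sq_nhdsGT_zero {c : ℝ → ℝ} {y : ℝ → E} {v : E}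
    (hc : Tendsto (fun t => t * c t) (𝓝[>] 0) (𝓝 1)) (hy : HasDerivAt y v 0) (hy0 : y 0 = 0) :
    Tendsto (fun t => c t * ‖y t‖ ^ 2) (𝓝[>] 0) (𝓝 0) := by
  have hslope : Tendsto (fun t => t⁻¹ • y t) (𝓝[>] 0) (𝓝 v) := by
    have := (hasDerivAt_iff_tendsto_slope.mp hy).mono_left (nhdsGT_le_nhdsNE 0)
    convert this using 1
    ext t
    simp [slope_def_module, hy0]
  have hid : Tendsto (fun t : ℝ => t) (𝓝[>] 0) (𝓝 0) := nhdsWithin_le_nhds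
  have hlim := (hc.mul (hslope.norm.pow 2)).mul hid
  rw [mul_zero] at hlim
  refine hlim.congr' ?_
  filter_upwards [self_mem_nhdsWithin] with t (ht : 0 < t)
  rw [norm_smul, mul_pow, norm_inv, Real.norm_of_nonneg ht.le]
  field_simp

lemma riccati_energy_identity (ρ c : ℝ) (y v a : E) :
    ⟪y, a⟫ + ⟪v, v⟫ - ((-ρ - c ^ 2) * ‖y‖ ^ 2 + c * (2 * ⟪y, v⟫)) =
      ‖v - c • y‖ ^ 2 + (⟪y, a⟫ + ρ * ‖y‖ ^ 2) := by
  rw [norm_sub_sq_real, norm_smul, inner_smul_right, real_inner_self_eq_norm_sq,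
    Real.norm_eq_abs, mul_pow, sq_abs, real_inner_comm y v]
  ring

theorem riccati_mul_norm_sq_le_inner {ρ r : ℝ} (hr : 0 < r) {c : ℝ → ℝ}
    (hc : ∀ t ∈ Ioc 0 r, HasDerivAt c (-ρ - c t ^ 2) t)
    (hc0 : Tendsto (fun t => t * c t) (𝓝[>] 0) (𝓝 1))
    {y v a : ℝ → E} (hy : ∀ t ∈ Icc 0 r, HasDerivAt y (v t) t)
    (hv : ∀ t ∈ Icc 0 r, HasDerivAt v (a t) t)
    (ha : ∀ t ∈ Icc 0 r, 0 ≤ ⟪y t, a t⟫ + ρ * ‖y t‖ ^ 2) (hy0 : y 0 = 0) :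
    c r * ‖y r‖ ^ 2 ≤ ⟪y r, v r⟫ := by
  set F : ℝ → ℝ := fun t => ⟪y t, v t⟫ - c t * ‖y t‖ ^ 2
  have hF : ∀ t ∈ Ioc 0 r,
      HasDerivAt F (‖v t - c t • y t‖ ^ 2 + (⟪y t, a t⟫ + ρ * ‖y t‖ ^ 2)) t := by
    intro t ht
    have htr : t ∈ Icc 0 r := Ioc_subset_Icc_self ht
    refine (((hy t htr).inner ℝ (hv t htr)).sub ((hc t ht).mul (hy t htr).norm_sq)).congr_deriv ?_
    rw [← riccati_energy_identity, real_inner_self_eq_norm_sq, real_inner_comm (v t) (y t)]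
  have hmono : MonotoneOn F (Ioc 0 r) := by
    refine monotoneOn_of_hasDerivWithinAt_nonneg (convex_Ioc 0 r)
      (fun t ht => (hF t ht).continuousAt.continuousWithinAt)
      (fun t ht => (hF t (interior_subset ht)).hasDerivWithinAt) fun t ht => ?_
    have := ha t (Ioc_subset_Icc_self (interior_subset ht))
    positivity
  have h0 : (0 : ℝ) ∈ Icc 0 r := ⟨le_rfl, hr.le⟩
  have hinner : Tendsto (fun t => ⟪y t, v t⟫) (𝓝[>] 0) (𝓝 0) := by
    have := ((hy 0 h0).continuousAt.tendsto.inner (𝕜 := ℝ) (hv 0 h0).continuousAt.tendsto)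
    simpa [hy0] using this.mono_left nhdsWithin_le_nhds
  have hF0 : Tendsto F (𝓝[>] 0) (𝓝 0) := by
    simpa using hinner.sub (tendsto_mul_norm_sq_nhdsGT_zero hc0 (hy 0 h0) hy0)
  have := nonneg_of_monotoneOn_Ioc_of_tendsto hr hmono hF0
  simp only [F] at this
  linarith

end Riccati

lemma Matrix.PosSemidef.inner_neg_mulVec_add_mul_norm_sq_nonneg {ι : Type*} [Fintype ι]
    [DecidableEq ι] {ρ : ℝ} {A : Matrix ι ι ℝ} (hA : (ρ • (1 : Matrix ι ι ℝ) - A).PosSemidef)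
    (x : ι → ℝ) :
    0 ≤ ⟪WithLp.toLp 2 x, WithLp.toLp 2 (-(A *ᵥ x))⟫ + ρ * ‖WithLp.toLp 2 x‖ ^ 2 := by
  have hx := hA.dotProduct_mulVec_nonneg x
  rw [← real_inner_self_eq_norm_sq]
  simp only [EuclideanSpace.inner_eq_star_dotProduct]
  simp only [star_trivial, sub_mulVec, smul_mulVec, one_mulVec, dotProduct_sub,
    dotProduct_smul, smul_eq_mul, sub_nonneg, neg_dotProduct, le_neg_add_iff_add_le,
    add_zero] at hx ⊢
  rwa [dotProduct_comm]

theorem card_mul_le_trace_of_riccati {ι : Type*} [Fintype ι] [DecidableEq ι] {ρ r : ℝ}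
    (hr : 0 < r) {c : ℝ → ℝ} (hc : ∀ t ∈ Ioc 0 r, HasDerivAt c (-ρ - c t ^ 2) t)
    (hc0 : Tendsto (fun t => t * c t) (𝓝[>] 0) (𝓝 1)) {R Y dY : ℝ → Matrix ι ι ℝ}
    (hRle : ∀ t ∈ Icc 0 r, (ρ • (1 : Matrix ι ι ℝ) - R t).PosSemidef)
    (hY : ∀ t ∈ Icc 0 r, HasDerivAt Y (dY t) t)
    (hdY : ∀ t ∈ Icc 0 r, HasDerivAt dY (-(R t * Y t)) t)
    (hY0 : Y 0 = 0) (hYr : Y r = 1) :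
    Fintype.card ι * c r ≤ (dY r).trace := by
  let col (M : Matrix ι ι ℝ) (j : ι) : EuclideanSpace ℝ ι := WithLp.toLp 2 (Mᵀ j)
  have hcol {M : ℝ → Matrix ι ι ℝ} {M' : Matrix ι ι ℝ} {t : ℝ} (hM : HasDerivAt M M' t) (j : ι) :
      HasDerivAt (fun s => col (M s) j) (col M' j) t :=
    (PiLp.continuousLinearEquiv 2 ℝ _).symm.hasFDerivAt.comp_hasDerivAt _
      (hasDerivAt_pi.mpr fun i => hasDerivAt_pi.mp (hasDerivAt_pi.mp hM i) j)
  have hcol_mul (t : ℝ) (j : ι) : col (-(R t * Y t)) j = WithLp.toLp 2 (-(R t *ᵥ (Y t)ᵀ j)) := by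
    ext i
    simp [col, Matrix.mul_apply, Matrix.mulVec, dotProduct]
  have hcolumn (j : ι) : c r * ‖col (Y r) j‖ ^ 2 ≤ ⟪col (Y r) j, col (dY r) j⟫ :=
    riccati_mul_norm_sq_le_inner hr hc hc0 (fun t ht => hcol (hY t ht) j)
      (fun t ht => hcol (hdY t ht) j)
      (fun t ht => hcol_mul t j ▸ (hRle t ht).inner_neg_mulVec_add_mul_norm_sq_nonneg _)
      (by simp only [col, hY0, transpose_zero]; rfl)
  calc (Fintype.card ι : ℝ) * c r = ∑ j, c r * ‖col (Y r) j‖ ^ 2 := by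
        simp [col, hYr, EuclideanSpace.real_norm_sq_eq, Matrix.one_apply]
    _ ≤ ∑ j, ⟪col (Y r) j, col (dY r) j⟫ := Finset.sum_le_sum fun j _ => hcolumn j
    _ = (dY r).trace := by simp [col, hYr, Matrix.trace, PiLp.inner_apply, Matrix.one_apply]

lemma tendsto_mul_inv_nhdsGT_zero : Tendsto (fun t : ℝ => t * t⁻¹) (𝓝[>] 0) (𝓝 1) :=
  tendsto_const_nhds.congr' <| by
    filter_upwards [self_mem_nhdsWithin] with t (ht : 0 < t)
    rw [mul_inv_cancel₀ ht.ne']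

lemma hasDerivAt_mul_cos_div_sin (q : ℝ) {t : ℝ} (ht : sin (q * t) ≠ 0) :
    HasDerivAt (fun t => q * cos (q * t) / sin (q * t))
      (-q ^ 2 - (q * cos (q * t) / sin (q * t)) ^ 2) t := by
  have hlin : HasDerivAt (fun s => q * s) q t := by simpa using (hasDerivAt_id t).const_mul q
  refine ((((hasDerivAt_cos _).comp t hlin).const_mul q).div
    ((hasDerivAt_sin _).comp t hlin) ht).congr_deriv ?_
  simp only [Function.comp_def]
  field_simp

/-- Near `0`, `t * (q cot (q t)) = cos (q t) / sinc (q t)`, which is continuous with value `1`. -/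
lemma tendsto_mul_mul_cos_div_sin {q : ℝ} (hq : q ≠ 0) :
    Tendsto (fun t => t * (q * cos (q * t) / sin (q * t))) (𝓝[>] 0) (𝓝 1) := by
  have hcont : ContinuousAt (fun t => cos (q * t) / sinc (q * t)) 0 :=
    ((continuous_cos.comp (continuous_const_mul q)).continuousAt).div
      ((continuous_sinc.comp (continuous_const_mul q)).continuousAt) (by simp)
  have h := hcont.tendsto.mono_left (nhdsWithin_le_nhds (s := Ioi 0))
  simp only [mul_zero, cos_zero, sinc_zero, div_one] at h
  refine h.congr' ?_
  filter_upwards [self_mem_nhdsWithin] with t (ht : 0 < t)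
  rw [sinc_of_ne_zero (mul_ne_zero hq ht.ne')]
  field_simp

theorem gunther_ode_form_general {m : ℕ} {ρ r : ℝ}
    (hr : 0 < r) (hρr : Real.sqrt ρ * r < Real.pi)
    (R : ℝ → Matrix (Fin m) (Fin m) ℝ)
    (hRle : ∀ t ∈ Icc (0:ℝ) r,
      (ρ • (1 : Matrix (Fin m) (Fin m) ℝ) - R t).PosSemidef)
    (Y dY : ℝ → Matrix (Fin m) (Fin m) ℝ)
    (hY : ∀ t ∈ Icc (0:ℝ) r, HasDerivAt Y (dY t) t)
    (hdY : ∀ t ∈ Icc (0:ℝ) r, HasDerivAt dY (-(R t * Y t)) t)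
    (hY0 : Y 0 = 0) (hYr : Y r = 1) :
    (ρ = 0 → (m : ℝ) / r ≤ (dY r).trace) ∧
    (0 < ρ → (m : ℝ) * Real.sqrt ρ * Real.cos (Real.sqrt ρ * r) /
      Real.sin (Real.sqrt ρ * r) ≤ (dY r).trace) := by
  have comparison (c : ℝ → ℝ) (hc : ∀ t ∈ Ioc 0 r, HasDerivAt c (-ρ - c t ^ 2) t)
      (hc0 : Tendsto (fun t => t * c t) (𝓝[>] 0) (𝓝 1)) : m * c r ≤ (dY r).trace := by
    simpa using card_mul_le_trace_of_riccati hr hc hc0 hRle hY hdY hY0 hYr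
  refine ⟨fun hρ => ?_, fun hρ => ?_⟩
  · subst hρ
    have hc (t : ℝ) (ht : t ∈ Ioc 0 r) : HasDerivAt (·⁻¹) (-0 - t⁻¹ ^ 2) t := by
      simpa using hasDerivAt_inv ht.1.ne'
    simpa [div_eq_mul_inv] using comparison _ hc tendsto_mul_inv_nhdsGT_zero
  · have hq : 0 < √ρ := sqrt_pos.mpr hρ
    have hsin (t : ℝ) (ht : t ∈ Ioc 0 r) : sin (√ρ * t) ≠ 0 :=
      (sin_pos_of_pos_of_lt_pi (mul_pos hq ht.1)
        ((mul_le_mul_of_nonneg_left ht.2 hq.le).trans_lt hρr)).ne'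
    have hc (t : ℝ) (ht : t ∈ Ioc 0 r) := sq_sqrt hρ.le ▸ hasDerivAt_mul_cos_div_sin (√ρ) (hsin t ht)
    simpa [mul_div_assoc, mul_assoc] using comparison _ hc (tendsto_mul_mul_cos_div_sin hq.ne')

/-- Günther's inequality in ODE form: if `R(t) ≤ ρI` with `0 ≤ ρ`, `0 < r`,
`√ρ·r < π`, and `Y` solves `Y'' = −R(t)Y`, `Y(0) = 0`, `Y(r) = I`, then
`Tr(Y'(r)) ≥ (n−1)/r` when `ρ = 0`, and
`Tr(Y'(r)) ≥ (n−1)√ρ cos(√ρ r)/sin(√ρ r)` when `ρ > 0`;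
i.e. `(log s(r))' ≥ (log s_ρ(r))'`.  Matrix size is `m = n − 1`. -/
theorem gunther_ode_form {m : ℕ} {ρ r : ℝ}
    (hρ : 0 ≤ ρ) (hr : 0 < r) (hρr : Real.sqrt ρ * r < Real.pi)
    (R : ℝ → Matrix (Fin m) (Fin m) ℝ)
    (hRcont : ∀ i j, Continuous fun t => R t i j)
    (hRsymm : ∀ t ∈ Icc (0:ℝ) r, (R t).IsSymm)
    (hRle : ∀ t ∈ Icc (0:ℝ) r,
      (ρ • (1 : Matrix (Fin m) (Fin m) ℝ) - R t).PosSemidef)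
    (Y dY : ℝ → Matrix (Fin m) (Fin m) ℝ)
    (hY : ∀ t ∈ Icc (0:ℝ) r, HasDerivAt Y (dY t) t)
    (hdY : ∀ t ∈ Icc (0:ℝ) r, HasDerivAt dY (-(R t * Y t)) t)
    (hY0 : Y 0 = 0) (hYr : Y r = 1) :
    (ρ = 0 → (m : ℝ) / r ≤ (dY r).trace) ∧
    (0 < ρ → (m : ℝ) * Real.sqrt ρ * Real.cos (Real.sqrt ρ * r) /
      Real.sin (Real.sqrt ρ * r) ≤ (dY r).trace) :=
  gunther_ode_form_general hr hρr R hRle Y dY hY hdY hY0 hYr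
end
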